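/- Let λ be a multipartition of n, μ a multipartition of m ≤ n that arises as a 'cut part' of λ, and γ the corresponding 'remaining part' (a partition). If u and v are standard γ-tableaux, then there exist standard λ-tableaux u̇ and v̇ such that applying the shift-embedding θ̂_{i_μ} to the affine element ψ̂_{uv} and multiplying by y_μ yields the cyclotomic basis element: θ̂_{i_μ}(ψ̂_{uv}) · y_μ = ψ_{u̇ v̇} in R^Λ_n. -/

import Mathlib

namespace Paper

/-! ## The Khovanov–Lauda–Rouquier (quiver Hecke) algebra of type `Γ_e` over ℤ -/

/-- generators of the KLR algebra `R_n` of type `Γ_e`: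
idempotents `e(i)` for `i ∈ I^n` (`I = ℤ/eℤ`), dots `y_1,…,y_n` and
crossings `ψ_1,…,ψ_{n-1}`. -/
inductive Gen (e n : ℕ) : Type
  | idem : (Fin n → ZMod e) → Gen e n
  | dot : Fin n → Gen e n
  | cross : Fin (n - 1) → Gen e n

/-- the free algebra on the KLR generators. -/
abbrev F (e n : ℕ) := FreeAlgebra ℤ (Gen e n)

def fe {e n : ℕ} (i : Fin n → ZMod e) : F e n := FreeAlgebra.ι ℤ (Gen.idem i)
def fy {e n : ℕ} (r : Fin n) : F e n := FreeAlgebra.ι ℤ (Gen.dot r)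
def fpsi {e n : ℕ} (r : Fin (n - 1)) : F e n := FreeAlgebra.ι ℤ (Gen.cross r)

/-- the index `r` of `ψ_r` as an element of `{1,…,n}` (0-based: position `r`). -/
def lo {n : ℕ} (r : Fin (n - 1)) : Fin n := ⟨r.1, by have := r.2; omega⟩
/-- the index `r+1`. -/
def hi {n : ℕ} (r : Fin (n - 1)) : Fin n := ⟨r.1 + 1, by have := r.2; omega⟩

/-- the action of the simple transposition `s_r` on a residue sequence. -/
def swapIdx {e n : ℕ} (r : Fin (n - 1)) (i : Fin n → ZMod e) : Fin n → ZMod e :=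
  i ∘ Equiv.swap (lo r) (hi r)

/-- the defining relations of the KLR algebra of type `Γ_e`
(Khovanov–Lauda, Rouquier).  The relation `∑_{i ∈ I^n} e(i) = 1` is imposed whenever
`I^n` is a finite set (i.e. `e ≠ 0`), via an arbitrary finset containing all of `I^n`. -/
inductive Rel (e n : ℕ) : F e n → F e n → Prop
  | idem_mul (i j : Fin n → ZMod e) :
      Rel e n (fe i * fe j) (if i = j then fe i else 0)
  | idem_sum (S : Finset (Fin n → ZMod e)) (hS : ∀ i, i ∈ S) :
      Rel e n (∑ i ∈ S, fe i) 1
  | dot_idem (k : Fin n) (i : Fin n → ZMod e) :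
      Rel e n (fy k * fe i) (fe i * fy k)
  | cross_idem (r : Fin (n - 1)) (i : Fin n → ZMod e) :
      Rel e n (fpsi r * fe i) (fe (swapIdx r i) * fpsi r)
  | dot_dot (k m : Fin n) : Rel e n (fy k * fy m) (fy m * fy k)
  | cross_dot (r : Fin (n - 1)) (k : Fin n) (h1 : k ≠ lo r) (h2 : k ≠ hi r) :
      Rel e n (fpsi r * fy k) (fy k * fpsi r)
  | cross_cross (r t : Fin (n - 1)) (h : r.1 + 1 < t.1 ∨ t.1 + 1 < r.1) :
      Rel e n (fpsi r * fpsi t) (fpsi t * fpsi r)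
  | cross_dot_hi (r : Fin (n - 1)) (i : Fin n → ZMod e) :
      Rel e n (fpsi r * fy (hi r) * fe i)
        ((fy (lo r) * fpsi r + if i (lo r) = i (hi r) then 1 else 0) * fe i)
  | dot_cross (r : Fin (n - 1)) (i : Fin n → ZMod e) :
      Rel e n (fy (hi r) * fpsi r * fe i)
        ((fpsi r * fy (lo r) + if i (lo r) = i (hi r) then 1 else 0) * fe i)
  | cross_sq_eq (r : Fin (n - 1)) (i : Fin n → ZMod e) (h : i (lo r) = i (hi r)) :
      Rel e n (fpsi r * fpsi r * fe i) 0
  | cross_sq_far (r : Fin (n - 1)) (i : Fin n → ZMod e) (h1 : i (lo r) ≠ i (hi r))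
      (h2 : i (hi r) ≠ i (lo r) + 1) (h3 : i (hi r) ≠ i (lo r) - 1) :
      Rel e n (fpsi r * fpsi r * fe i) (fe i)
  | cross_sq_up (r : Fin (n - 1)) (i : Fin n → ZMod e) (he : e ≠ 2)
      (h : i (hi r) = i (lo r) + 1) :
      Rel e n (fpsi r * fpsi r * fe i) ((fy (hi r) - fy (lo r)) * fe i)
  | cross_sq_down (r : Fin (n - 1)) (i : Fin n → ZMod e) (he : e ≠ 2)
      (h : i (hi r) = i (lo r) - 1) :
      Rel e n (fpsi r * fpsi r * fe i) ((fy (lo r) - fy (hi r)) * fe i)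
  | cross_sq_two (r : Fin (n - 1)) (i : Fin n → ZMod e) (he : e = 2)
      (h : i (hi r) = i (lo r) + 1) :
      Rel e n (fpsi r * fpsi r * fe i)
        ((fy (hi r) - fy (lo r)) * (fy (lo r) - fy (hi r)) * fe i)
  | braid_other (r t : Fin (n - 1)) (ht : t.1 = r.1 + 1) (i : Fin n → ZMod e)
      (h : ¬ (i (hi t) = i (lo r) ∧ (i (hi r) = i (lo r) + 1 ∨ i (hi r) = i (lo r) - 1))) :
      Rel e n (fpsi r * fpsi t * fpsi r * fe i) (fpsi t * fpsi r * fpsi t * fe i)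
  | braid_plus (r t : Fin (n - 1)) (ht : t.1 = r.1 + 1) (i : Fin n → ZMod e)
      (he : e ≠ 2) (h1 : i (hi t) = i (lo r)) (h2 : i (hi r) = i (lo r) + 1) :
      Rel e n (fpsi r * fpsi t * fpsi r * fe i) ((fpsi t * fpsi r * fpsi t + 1) * fe i)
  | braid_minus (r t : Fin (n - 1)) (ht : t.1 = r.1 + 1) (i : Fin n → ZMod e)
      (he : e ≠ 2) (h1 : i (hi t) = i (lo r)) (h2 : i (hi r) = i (lo r) - 1) :
      Rel e n (fpsi r * fpsi t * fpsi r * fe i) ((fpsi t * fpsi r * fpsi t - 1) * fe i)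
  | braid_two (r t : Fin (n - 1)) (ht : t.1 = r.1 + 1) (i : Fin n → ZMod e)
      (he : e = 2) (h1 : i (hi t) = i (lo r)) (h2 : i (hi r) = i (lo r) + 1) :
      Rel e n (fpsi r * fpsi t * fpsi r * fe i)
        ((fpsi t * fpsi r * fpsi t + fy (lo r) - 2 * fy (hi r) + fy (hi t)) * fe i)

/-- the KLR (quiver Hecke) algebra `R_n` of type `Γ_e` over ℤ. -/
abbrev KLR (e n : ℕ) := RingQuot (Rel e n)

/-- the idempotent generator `e(i)` of `R_n`. -/
noncomputable def ae (e n : ℕ) (i : Fin n → ZMod e) : KLR e n :=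
  RingQuot.mkRingHom (Rel e n) (fe i)
/-- the dot generator `y_r` of `R_n` (0-based index: `ay e n ⟨r-1,_⟩` is `y_r`). -/
noncomputable def ay (e n : ℕ) (r : Fin n) : KLR e n :=
  RingQuot.mkRingHom (Rel e n) (fy r)
/-- the crossing generator `ψ_r` of `R_n` (0-based index). -/
noncomputable def apsi (e n : ℕ) (r : Fin (n - 1)) : KLR e n :=
  RingQuot.mkRingHom (Rel e n) (fpsi r)

end Paper
namespace Paper

/-- the cyclotomic relations: `e(i) y_1^{(Λ,α_{i_1})} = 0`, where the dominant weight `Λ`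
is recorded as the finitely supported function `I → ℕ`, `i ↦ (Λ, α_i)`. -/
inductive CRel (e n : ℕ) (Λ : ZMod e →₀ ℕ) : KLR e n → KLR e n → Prop
  | cyc (i : Fin n → ZMod e) (h : 0 < n) :
      CRel e n Λ (ae e n i * ay e n (⟨0, h⟩ : Fin n) ^ Λ (i ⟨0, h⟩)) 0

/-- the cyclotomic KLR algebra `R_n^Λ` of type `Γ_e` over ℤ. -/
abbrev CKLR (e n : ℕ) (Λ : ZMod e →₀ ℕ) := RingQuot (CRel e n Λ)

noncomputable def ce (e n : ℕ) (Λ : ZMod e →₀ ℕ) (i : Fin n → ZMod e) : CKLR e n Λ :=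
  RingQuot.mkRingHom (CRel e n Λ) (ae e n i)
noncomputable def cy (e n : ℕ) (Λ : ZMod e →₀ ℕ) (r : Fin n) : CKLR e n Λ :=
  RingQuot.mkRingHom (CRel e n Λ) (ay e n r)
noncomputable def cpsi (e n : ℕ) (Λ : ZMod e →₀ ℕ) (r : Fin (n - 1)) : CKLR e n Λ :=
  RingQuot.mkRingHom (CRel e n Λ) (apsi e n r)

end Paper
noncomputable section
open scoped Classical
namespace Paper

/-! ## Multipartitions and tableaux

A node is a triple (component, row, column), all 0-based.  A multicomposition of level
`l` is a function `Fin l → ℕ → ℕ` (component ↦ row ↦ row length).  Tableaux take values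
in `{1,…,n}` (and `0` outside the diagram). -/

abbrev Node (l : ℕ) := Fin l × ℕ × ℕ

/-- the Young diagram of a multicomposition. -/
def diag (l : ℕ) (lam : Fin l → ℕ → ℕ) : Set (Node l) :=
  {x | x.2.2 < lam x.1 x.2.1}

/-- `lam` is a multipartition of `n` (of level `l`). -/
def IsMultipartition (l n : ℕ) (lam : Fin l → ℕ → ℕ) : Prop :=
  (∀ c : Fin l, Antitone (lam c)) ∧ (∀ (c : Fin l) (r : ℕ), lam c r ≠ 0 → r < n) ∧
    (∑ c : Fin l, ∑ r ∈ Finset.range n, lam c r) = n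

/-- the size of the `c`-th component of `lam` (whose rows are supported in `[0,n)`). -/
def compSize (l n : ℕ) (lam : Fin l → ℕ → ℕ) (c : Fin l) : ℕ :=
  ∑ r ∈ Finset.range n, lam c r

/-- a `lam`-tableau: a bijection from the diagram of `lam` onto `{1,…,n}`,
normalised to vanish off the diagram. -/
def IsTableau (l n : ℕ) (lam : Fin l → ℕ → ℕ) (T : Node l → ℕ) : Prop :=
  Set.BijOn T (diag l lam) (Set.Icc 1 n) ∧ ∀ x, x ∉ diag l lam → T x = 0

/-- entries increase along rows and down columns. -/
def RowColIncreasing (l : ℕ) (lam : Fin l → ℕ → ℕ) (T : Node l → ℕ) : Prop :=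
  (∀ (c : Fin l) (r j : ℕ), j + 1 < lam c r → T (c, r, j) < T (c, r, j + 1)) ∧
  (∀ (c : Fin l) (r j : ℕ), j < lam c (r + 1) → T (c, r, j) < T (c, r + 1, j))

/-- `T` is a standard `lam`-tableau (in particular `lam` is a multipartition of `n`). -/
def IsStdTab (l n : ℕ) (lam : Fin l → ℕ → ℕ) (T : Node l → ℕ) : Prop :=
  IsMultipartition l n lam ∧ IsTableau l n lam T ∧ RowColIncreasing l lam T

/-- the initial tableau `t^λ`, filling `1,2,…,n` along the rows of the first component,
then the second component, and so on; it is the unique dominance-greatest standard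
`λ`-tableau. -/
def initTab (l n : ℕ) (lam : Fin l → ℕ → ℕ) : Node l → ℕ := fun x =>
  if x.2.2 < lam x.1 x.2.1 then
    (∑ c ∈ Finset.univ.filter (fun c : Fin l => c < x.1), compSize l n lam c) +
      (∑ r ∈ Finset.range x.2.1, lam x.1 r) + x.2.2 + 1
  else 0

/-- the shape of `T|_k`, the subtableau of entries `≤ k`. -/
def restShape (l : ℕ) (lam : Fin l → ℕ → ℕ) (T : Node l → ℕ) (k : ℕ) :
    Fin l → ℕ → ℕ :=
  fun c r => ((Finset.range (lam c r)).filter fun j => T (c, r, j) ≤ k).card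

/-- the partial sum `∑_{c' < c} |λ^{(c')}| + ∑_{r < k} λ^{(c)}_r` used to define
the dominance order. -/
def partialSum (l n : ℕ) (lam : Fin l → ℕ → ℕ) (c : Fin l) (k : ℕ) : ℕ :=
  (∑ c' ∈ Finset.univ.filter (fun c' : Fin l => c' < c), compSize l n lam c') +
    ∑ r ∈ Finset.range k, lam c r

/-- the dominance order `lam ⊵ mu` on multicompositions of the same level. -/
def ShapeDom (l n : ℕ) (lam mu : Fin l → ℕ → ℕ) : Prop :=
  ∀ (c : Fin l) (k : ℕ), partialSum l n mu c k ≤ partialSum l n lam c k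

/-- the dominance order `S ⊵ T` on `λ`-tableaux: `Shape(S|_k) ⊵ Shape(T|_k)` for all `k`. -/
def TabDom (l n : ℕ) (lam : Fin l → ℕ → ℕ) (S T : Node l → ℕ) : Prop :=
  ∀ k : ℕ, ShapeDom l n (restShape l lam S k) (restShape l lam T k)

/-- the adjacent transposition `s_r = (r, r+1)` on entries. -/
def sw (r : ℕ) : Equiv.Perm ℕ := Equiv.swap r (r + 1)

/-- the (right) action of a permutation of the entries on a tableau:
`(T·w)(x) = (T x)·w`. -/
def actT (l : ℕ) (T : Node l → ℕ) (w : Equiv.Perm ℕ) : Node l → ℕ := fun x => w (T x)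

/-- the action of a word `s_{r_1} s_{r_2} ⋯ s_{r_m}` (leftmost letter acting first). -/
def actWord (l : ℕ) (T : Node l → ℕ) (L : List ℕ) : Node l → ℕ :=
  L.foldl (fun U r => actT l U (sw r)) T

/-! ### The standard expression of `d(t)`

For a standard `λ`-tableau `t` let `t^{(i)}` be the tableau agreeing with `t` on the
entries `≥ i` and equal to the initial tableau of its shape on the entries `< i`;
then `t^{(i+1)} w_i = t^{(i)}` with `w_i = s_{a_i} s_{a_i + 1} ⋯ s_{i-1}` (or `w_i = 1`),
where `a_i` is the entry of `t^{(i+1)}` at the node of `t` containing `i`, and the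
standard expression of `d(t)` is the concatenated word `w_n w_{n-1} ⋯ w_1`. -/

/-- the interpolating tableau `t^{(i)}`. -/
def interT (l n : ℕ) (lam : Fin l → ℕ → ℕ) (T : Node l → ℕ) (i : ℕ) : Node l → ℕ :=
  fun x => if i ≤ T x then T x else initTab l n (restShape l lam T (i - 1)) x

/-- the entry `a_i` of `t^{(i+1)}` at the node of `t` containing `i`
(junk value `i`, giving the empty word, if there is no such node). -/
def aEntry (l n : ℕ) (lam : Fin l → ℕ → ℕ) (T : Node l → ℕ) (i : ℕ) : ℕ :=
  if h : ∃ x, x ∈ diag l lam ∧ T x = i then interT l n lam T (i + 1) h.choose else i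

/-- the word `[a_i, a_i + 1, …, i-1]` of `w_i`. -/
def wordAt (l n : ℕ) (lam : Fin l → ℕ → ℕ) (T : Node l → ℕ) (i : ℕ) : List ℕ :=
  List.range' (aEntry l n lam T i) (i - aEntry l n lam T i)

/-- the standard expression of `d(t)`, as the word `w_n w_{n-1} ⋯ w_1` read left to
right (leftmost letter first). -/
def stdWord (l n : ℕ) (lam : Fin l → ℕ → ℕ) (T : Node l → ℕ) : List ℕ :=
  ((List.range (n + 1)).reverse.map (wordAt l n lam T)).flatten

end Paper
end
noncomputable section
open scoped Classical
namespace Paper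

/-! ## Residues, addable nodes and the elements `e_λ`, `y_λ`, `ψ_{st}` -/

/-- the residue of a node: `res (r, c, m) = r - c + κ_m ∈ I = ℤ/eℤ`
(for the multicharge `κ`). -/
def res (e : ℕ) {l : ℕ} (κ : Fin l → ZMod e) (x : Node l) : ZMod e :=
  (x.2.1 : ZMod e) - (x.2.2 : ZMod e) + κ x.1

/-- the residue `res_T(k)` of the node of the tableau `T` containing the entry `k`. -/
def resAt (e : ℕ) {l : ℕ} (κ : Fin l → ZMod e) (lam : Fin l → ℕ → ℕ)
    (T : Node l → ℕ) (k : ℕ) : ZMod e :=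
  if h : ∃ x, x ∈ diag l lam ∧ T x = k then res e κ h.choose else 0

/-- the residue sequence `i_T = (res_T(1), …, res_T(n)) ∈ I^n` of a tableau. -/
def resSeqT (e n : ℕ) {l : ℕ} (κ : Fin l → ZMod e) (lam : Fin l → ℕ → ℕ)
    (T : Node l → ℕ) : Fin n → ZMod e :=
  fun k => resAt e κ lam T (k.1 + 1)

/-- `x` is an addable node of the multipartition `lam`. -/
def IsAddable {l : ℕ} (lam : Fin l → ℕ → ℕ) (x : Node l) : Prop :=
  x.2.2 = lam x.1 x.2.1 ∧ (x.2.1 = 0 ∨ lam x.1 x.2.1 < lam x.1 (x.2.1 - 1))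

/-- `x` is below `y`: in a later component, or in the same component and a later row. -/
def Below {l : ℕ} (x y : Node l) : Prop :=
  y.1 < x.1 ∨ (y.1 = x.1 ∧ y.2.1 < x.2.1)

/-- `A^Λ_T(k)`: the addable nodes of `Shape(T|_k)` which lie below the node of `T`
containing `k` and have the same residue as it. -/
def addSet (e : ℕ) {l : ℕ} (κ : Fin l → ZMod e) (lam : Fin l → ℕ → ℕ)
    (T : Node l → ℕ) (k : ℕ) : Set (Node l) :=
  {x | IsAddable (restShape l lam T k) x ∧
    ∀ y : Node l, y ∈ diag l lam → T y = k → (Below x y ∧ res e κ x = res e κ y)}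

/-- `|A^Λ_T(k)|`. -/
def addCount (e : ℕ) {l : ℕ} (κ : Fin l → ZMod e) (lam : Fin l → ℕ → ℕ)
    (T : Node l → ℕ) (k : ℕ) : ℕ :=
  (addSet e κ lam T k).ncard

/-- the element `y_μ = ∏_{k=1}^{m} y_k^{|A^Λ_{t^μ}(k)|}` of `R^Λ_n`, for a
multipartition `μ` of `m ≤ n`. -/
def yEl (e n : ℕ) (Λ : ZMod e →₀ ℕ) {l : ℕ} (κ : Fin l → ZMod e)
    (lam : Fin l → ℕ → ℕ) (m : ℕ) : CKLR e n Λ :=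
  ((List.range m).map fun j =>
    if h : j < n then cy e n Λ ⟨j, h⟩ ^ addCount e κ lam (initTab l m lam) (j + 1)
    else 1).prod

/-- `ψ_r ∈ R^Λ_n` for a (1-based) index `1 ≤ r ≤ n-1` (and `1` for junk indices). -/
def cpsiOf (e n : ℕ) (Λ : ZMod e →₀ ℕ) (r : ℕ) : CKLR e n Λ :=
  if h : 1 ≤ r ∧ r < n then cpsi e n Λ ⟨r - 1, by obtain ⟨h1, h2⟩ := h; omega⟩ else 1

/-- `ψ_w` for a word `w = s_{r_1} ⋯ s_{r_m}`. -/
def psiWord (e n : ℕ) (Λ : ZMod e →₀ ℕ) (L : List ℕ) : CKLR e n Λ :=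
  (L.map (cpsiOf e n Λ)).prod

/-- the graded cellular basis element
`ψ_{st} = ψ*_{d(s)} e_λ y_λ ψ_{d(t)} ∈ R^Λ_n`, where `d(s), d(t)` are taken with their
standard expressions and `e_λ = e(i_λ)` for the residue sequence `i_λ` of `t^λ`. -/
def psiST (e n : ℕ) (Λ : ZMod e →₀ ℕ) {l : ℕ} (κ : Fin l → ZMod e)
    (lam : Fin l → ℕ → ℕ) (S T : Node l → ℕ) : CKLR e n Λ :=
  psiWord e n Λ ((stdWord l n lam S).reverse) *
    ce e n Λ (resSeqT e n κ lam (initTab l n lam)) *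
    yEl e n Λ κ lam n *
    psiWord e n Λ (stdWord l n lam T)

end Paper
end
noncomputable section
open scoped Classical
namespace Paper

/-! ## Cutting a multipartition and the shift embedding `θ̂` -/

/-- the index of the last component. -/
def lastC (l : ℕ) (h : 0 < l) : Fin l := ⟨l - 1, by omega⟩

/-- the cut `m` of `λ` associated to the cut row `a` (0-based: the first `a` rows of
the last component are kept): `m = ∑_{c < ℓ} |λ^{(c)}| + ∑_{r < a} λ^{(ℓ)}_r`. -/
def cutM (l n : ℕ) (h : 0 < l) (lam : Fin l → ℕ → ℕ) (a : ℕ) : ℕ :=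
  (∑ c ∈ Finset.univ.filter (fun c : Fin l => c < lastC l h), compSize l n lam c) +
    ∑ r ∈ Finset.range a, lam (lastC l h) r

/-- the cut part `μ = λ|_m`. -/
def muPart (l : ℕ) (h : 0 < l) (lam : Fin l → ℕ → ℕ) (a : ℕ) : Fin l → ℕ → ℕ :=
  fun c r => if c = lastC l h ∧ a ≤ r then 0 else lam c r

/-- the remaining part `γ` (a partition, viewed as a level-1 multipartition):
the rows `a, a+1, …` of the last component of `λ`. -/
def gamma1 (l : ℕ) (h : 0 < l) (lam : Fin l → ℕ → ℕ) (a : ℕ) : Fin 1 → ℕ → ℕ :=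
  fun _ r => lam (lastC l h) (a + r)

/-- the cut residue `s`: the residue of the node `(a+1, 1, ℓ)` (0-based: `(a,0)` in the
last component). -/
def cutRes (e l : ℕ) (h : 0 < l) (κ : Fin l → ZMod e) (a : ℕ) : ZMod e :=
  res e κ (lastC l h, a, 0)

/-- the level-1 multicharge of the cut weight `Λ' = Λ_s`. -/
def kappa1 (e l : ℕ) (h : 0 < l) (κ : Fin l → ZMod e) (a : ℕ) : Fin 1 → ZMod e :=
  fun _ => cutRes e l h κ a

/-- `ψ_r` in the free algebra on the KLR generators, 1-based index. -/
def fpsiOf (e n' : ℕ) (r : ℕ) : F e n' :=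
  if h : 1 ≤ r ∧ r < n' then fpsi ⟨r - 1, by obtain ⟨h1, h2⟩ := h; omega⟩ else 1

/-- `ψ_w` in the free algebra. -/
def fPsiWord (e n' : ℕ) (L : List ℕ) : F e n' := (L.map (fpsiOf e n')).prod

/-- `ŷ_γ` in the free algebra (for `γ` of size `m' ≤ n'` and multicharge `κ'`). -/
def fyEl (e n' : ℕ) {l : ℕ} (κ' : Fin l → ZMod e) (lam' : Fin l → ℕ → ℕ)
    (m' : ℕ) : F e n' :=
  ((List.range m').map fun j =>
    if h : j < n' then
      fy (e := e) (⟨j, h⟩ : Fin n') ^ addCount e κ' lam' (initTab l m' lam') (j + 1)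
    else 1).prod

/-- the canonical word representing `ψ̂_{uv} = ψ̂*_{d(u)} ê_γ ŷ_γ ψ̂_{d(v)}` in the free
algebra on the KLR generators of `R_{n'}`. -/
def fPsiHat (e n' : ℕ) {l : ℕ} (κ' : Fin l → ZMod e) (lam' : Fin l → ℕ → ℕ)
    (U V : Node l → ℕ) : F e n' :=
  fPsiWord e n' ((stdWord l n' lam' U).reverse) *
    fe (fun k : Fin n' => resAt e κ' lam' (initTab l n' lam') (k.1 + 1)) *
    fyEl e n' κ' lam' n' *
    fPsiWord e n' ((stdWord l n' lam' V))

/-- the shift embedding `θ̂_j : R_{n-m} → R^Λ_n` (as an algebra map on the free algebra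
on the generators of `R_{n-m}`): `e(i) ↦ e(j ∨ i)`, `y_r ↦ y_{r+m}`, `ψ_r ↦ ψ_{r+m}`. -/
def thetaFree (e n : ℕ) (Λ : ZMod e →₀ ℕ) (m : ℕ) (j : Fin m → ZMod e) :
    F e (n - m) →ₐ[ℤ] CKLR e n Λ :=
  FreeAlgebra.lift ℤ fun g =>
    match g with
    | Gen.idem i => ce e n Λ (fun x : Fin n =>
        if hx : x.1 < m then j ⟨x.1, hx⟩ else i ⟨x.1 - m, by have := x.2; omega⟩)
    | Gen.dot r => if hr : r.1 + m < n then cy e n Λ ⟨r.1 + m, hr⟩ else 1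
    | Gen.cross r => if hr : r.1 + m < n - 1 then cpsi e n Λ ⟨r.1 + m, hr⟩ else 1

end Paper
end

/-!
Take `u̇` to be `t^μ` on the nodes of `μ` and `u + m` on the rows of `γ`. It is standard, and
since its entries `1, …, m` sit where they do in `t^μ`, the standard expression of `d(u̇)` is
that of `d(u)` shifted by `m`. In the same way `t^λ` is the extension of `t^γ`, so
`i_λ = i_μ ∨ i_γ`. The addable nodes counted by `y_λ` at an entry `k ≤ m` are those counted by
`y_μ`; at an entry `m + k` they lie in the rows of `γ`, where residues are those of `γ` for the
multicharge `s` of `Λ'`, so `y_λ = y_μ · θ̂(ŷ_γ)`. Finally `y_μ` involves only `y_1, …, y_m`,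
which commute with every dot and with `ψ_r` for `r > m`, so it moves into place.
-/
noncomputable section
open scoped Classical
namespace Paper
open Finset

lemma sum_range_eq_of_support {f : ℕ → ℕ} {M A : ℕ} (hf : ∀ r, f r ≠ 0 → r < M)
    (hMA : M ≤ A) : ∑ r ∈ range A, f r = ∑ r ∈ range M, f r :=
  (sum_subset (range_subset_range.2 hMA) fun r _ hr => by
    by_contra h
    exact hr (mem_range.2 (hf r h))).symm

lemma sum_range_mono (f : ℕ → ℕ) {A B : ℕ} (h : A ≤ B) :
    ∑ r ∈ range A, f r ≤ ∑ r ∈ range B, f r :=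
  sum_le_sum_of_subset (range_subset_range.2 h)

lemma sum_range_le_of_support {f : ℕ → ℕ} {M : ℕ} (hf : ∀ r, f r ≠ 0 → r < M) (A : ℕ) :
    ∑ r ∈ range A, f r ≤ ∑ r ∈ range M, f r :=
  (sum_range_mono f (le_max_left A M)).trans_eq (sum_range_eq_of_support hf (le_max_right A M))

lemma add_one_le_sum_range_of_antitone {f : ℕ → ℕ} (hf : Antitone f) {r : ℕ} (h : f r ≠ 0) :
    r + 1 ≤ ∑ i ∈ range (r + 1), f i :=
  calc r + 1 = ∑ _i ∈ range (r + 1), 1 := by simp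
    _ ≤ ∑ i ∈ range (r + 1), f i := sum_le_sum fun i hi => by
      have := hf (Nat.lt_succ_iff.1 (mem_range.1 hi))
      omega

lemma exists_sum_range_lt_le (f : ℕ → ℕ) (N : ℕ) {k : ℕ} (h1 : 1 ≤ k)
    (h2 : k ≤ ∑ r ∈ range N, f r) :
    ∃ r < N, ∑ i ∈ range r, f i < k ∧ k ≤ ∑ i ∈ range r, f i + f r := by
  induction N with
  | zero => simp only [range_zero, sum_empty] at h2; omega
  | succ N ih =>
    rcases le_or_gt k (∑ r ∈ range N, f r) with h | h
    · obtain ⟨r, hr, h4, h5⟩ := ih h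
      exact ⟨r, by omega, h4, h5⟩
    · rw [sum_range_succ] at h2
      exact ⟨N, by omega, h, h2⟩

section InitialTableau

variable {l n : ℕ} {lam : Fin l → ℕ → ℕ}

/-- Component sizes indexed by `ℕ`, so that the components before `c` form a `range`. -/
def compSizeNat (l n : ℕ) (lam : Fin l → ℕ → ℕ) (i : ℕ) : ℕ :=
  if h : i < l then compSize l n lam ⟨i, h⟩ else 0

def compStart (l n : ℕ) (lam : Fin l → ℕ → ℕ) (c : Fin l) : ℕ :=
  ∑ i ∈ range c.1, compSizeNat l n lam i

lemma compSizeNat_val (c : Fin l) : compSizeNat l n lam c.1 = compSize l n lam c := by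
  simp [compSizeNat, c.2]

lemma sum_range_compSizeNat (hlam : IsMultipartition l n lam) :
    ∑ i ∈ range l, compSizeNat l n lam i = n := by
  rw [← Fin.sum_univ_eq_sum_range]
  simp_rw [compSizeNat_val]
  exact hlam.2.2

lemma compStart_succ (c : Fin l) :
    ∑ i ∈ range (c.1 + 1), compSizeNat l n lam i = compStart l n lam c + compSize l n lam c := by
  rw [sum_range_succ, compSizeNat_val, compStart]

lemma partialSum_eq_compStart_add (c : Fin l) (k : ℕ) :
    partialSum l n lam c k = compStart l n lam c + ∑ r ∈ range k, lam c r := by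
  have hfilter : ∑ c' ∈ univ.filter (· < c), compSize l n lam c' = compStart l n lam c := by
    refine sum_bij' (fun c' _ => c'.1) (fun i hi => ⟨i, (mem_range.1 hi).trans c.2⟩)
      (fun c' hc' => mem_range.2 (Fin.lt_def.1 (mem_filter.1 hc').2))
      (fun i hi => mem_filter.2 ⟨mem_univ _, Fin.lt_def.2 (mem_range.1 hi)⟩)
      (fun _ _ => rfl) (fun _ _ => rfl) (fun c' _ => (compSizeNat_val c').symm)
  rw [partialSum, hfilter]

lemma partialSum_succ (c : Fin l) (k : ℕ) :
    partialSum l n lam c (k + 1) = partialSum l n lam c k + lam c k := by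
  rw [partialSum_eq_compStart_add, partialSum_eq_compStart_add, sum_range_succ, add_assoc]

lemma partialSum_mono (c : Fin l) {k k' : ℕ} (h : k ≤ k') :
    partialSum l n lam c k ≤ partialSum l n lam c k' := by
  rw [partialSum_eq_compStart_add, partialSum_eq_compStart_add]
  exact Nat.add_le_add_left (sum_range_mono _ h) _

lemma compStart_le_partialSum (c : Fin l) (k : ℕ) :
    compStart l n lam c ≤ partialSum l n lam c k := by
  rw [partialSum_eq_compStart_add]
  exact Nat.le_add_right _ _

lemma partialSum_le (hlam : IsMultipartition l n lam) (c : Fin l) (k : ℕ) :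
    partialSum l n lam c k ≤ compStart l n lam c + compSize l n lam c := by
  rw [partialSum_eq_compStart_add]
  exact Nat.add_le_add_left (sum_range_le_of_support (hlam.2.1 c) k) _

lemma compStart_add_compSize_le_compStart {c c' : Fin l} (h : c.1 < c'.1) :
    compStart l n lam c + compSize l n lam c ≤ compStart l n lam c' := by
  rw [← compStart_succ]
  exact sum_range_mono _ h

lemma compStart_add_compSize_le (hlam : IsMultipartition l n lam) (c : Fin l) :
    compStart l n lam c + compSize l n lam c ≤ n := by
  rw [← compStart_succ]
  exact (sum_range_mono _ c.2).trans_eq (sum_range_compSizeNat hlam)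

lemma initTab_of_mem {x : Node l} (hx : x ∈ diag l lam) :
    initTab l n lam x = partialSum l n lam x.1 x.2.1 + x.2.2 + 1 :=
  if_pos hx

lemma initTab_of_not_mem {x : Node l} (hx : x ∉ diag l lam) : initTab l n lam x = 0 :=
  if_neg hx

lemma initTab_le_partialSum_succ {x : Node l} (hx : x ∈ diag l lam) :
    initTab l n lam x ≤ partialSum l n lam x.1 (x.2.1 + 1) := by
  have hx' : x.2.2 < lam x.1 x.2.1 := hx
  rw [initTab_of_mem hx, partialSum_succ]
  omega

lemma one_le_initTab {x : Node l} (hx : x ∈ diag l lam) : 1 ≤ initTab l n lam x := by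
  rw [initTab_of_mem hx]
  omega

lemma initTab_mem_Icc (hlam : IsMultipartition l n lam) {x : Node l} (hx : x ∈ diag l lam) :
    initTab l n lam x ∈ Set.Icc 1 n := by
  refine ⟨one_le_initTab hx, ?_⟩
  calc initTab l n lam x ≤ partialSum l n lam x.1 (x.2.1 + 1) := initTab_le_partialSum_succ hx
    _ ≤ compStart l n lam x.1 + compSize l n lam x.1 := partialSum_le hlam _ _
    _ ≤ n := compStart_add_compSize_le hlam _

lemma initTab_lt_initTab (hlam : IsMultipartition l n lam) {x x' : Node l}
    (hx : x ∈ diag l lam) (hx' : x' ∈ diag l lam)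
    (h : x.1.1 < x'.1.1 ∨ (x.1 = x'.1 ∧ x.2.1 < x'.2.1)) :
    initTab l n lam x < initTab l n lam x' := by
  have h1 := initTab_le_partialSum_succ (n := n) hx
  have h2 : partialSum l n lam x'.1 x'.2.1 < initTab l n lam x' := by
    rw [initTab_of_mem hx']
    omega
  rcases h with h | ⟨hc, hr⟩
  · have := partialSum_le hlam x.1 (x.2.1 + 1)
    have := compStart_add_compSize_le_compStart (n := n) (lam := lam) h
    have := compStart_le_partialSum (n := n) (lam := lam) x'.1 x'.2.1
    omega
  · rw [hc] at h1
    have := partialSum_mono (n := n) (lam := lam) x'.1 (show x.2.1 + 1 ≤ x'.2.1 from hr)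
    omega

lemma initTab_injOn (hlam : IsMultipartition l n lam) :
    Set.InjOn (initTab l n lam) (diag l lam) := by
  rintro ⟨c, r, j⟩ hx ⟨c', r', j'⟩ hy he
  rcases Nat.lt_trichotomy c.1 c'.1 with h | h | h
  · exact absurd he (initTab_lt_initTab hlam hx hy (Or.inl h)).ne
  · obtain rfl : c = c' := Fin.ext h
    rcases Nat.lt_trichotomy r r' with h' | rfl | h'
    · exact absurd he (initTab_lt_initTab hlam hx hy (Or.inr ⟨rfl, h'⟩)).ne
    · rw [initTab_of_mem hx, initTab_of_mem hy] at he
      dsimp only at he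
      simp only [Prod.mk.injEq, true_and]
      omega
    · exact absurd he (initTab_lt_initTab hlam hy hx (Or.inr ⟨rfl, h'⟩)).ne'
  · exact absurd he (initTab_lt_initTab hlam hy hx (Or.inl h)).ne'

lemma initTab_surjOn (hlam : IsMultipartition l n lam) :
    Set.SurjOn (initTab l n lam) (diag l lam) (Set.Icc 1 n) := by
  rintro k ⟨hk1, hk2⟩
  obtain ⟨i, hil, h4, h5⟩ := exists_sum_range_lt_le (compSizeNat l n lam) l hk1
    (by rwa [sum_range_compSizeNat hlam])
  set c : Fin l := ⟨i, hil⟩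
  rw [compSizeNat_val (n := n) (lam := lam) c, compSize] at h5
  rw [show ∑ j ∈ range i, compSizeNat l n lam j = compStart l n lam c from rfl] at h4 h5
  obtain ⟨r, -, h6, h7⟩ := exists_sum_range_lt_le (lam c) n
    (k := k - compStart l n lam c) (by omega) (by omega)
  have hmem : ((c, r, k - compStart l n lam c - ∑ i ∈ range r, lam c i - 1) : Node l)
      ∈ diag l lam :=
    show k - compStart l n lam c - ∑ i ∈ range r, lam c i - 1 < lam c r by omega
  refine ⟨_, hmem, ?_⟩
  rw [initTab_of_mem hmem, partialSum_eq_compStart_add]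
  dsimp only
  omega

lemma initTab_rowColIncreasing (hlam : IsMultipartition l n lam) :
    RowColIncreasing l lam (initTab l n lam) := by
  constructor
  · intro c r j h
    have h1 : ((c, r, j) : Node l) ∈ diag l lam := show j < lam c r by omega
    rw [initTab_of_mem h1, initTab_of_mem (show j + 1 < lam c r from h)]
    dsimp only
    omega
  · intro c r j h
    have hle : lam c (r + 1) ≤ lam c r := hlam.1 c (Nat.le_succ r)
    have h1 : ((c, r, j) : Node l) ∈ diag l lam := show j < lam c r by omega
    rw [initTab_of_mem h1, initTab_of_mem (show j < lam c (r + 1) from h)]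
    have := partialSum_succ (n := n) (lam := lam) c r
    dsimp only
    omega

lemma isStdTab_initTab (hlam : IsMultipartition l n lam) :
    IsStdTab l n lam (initTab l n lam) :=
  ⟨hlam, ⟨⟨fun _ hx => initTab_mem_Icc hlam hx, initTab_injOn hlam, initTab_surjOn hlam⟩,
    fun _ hx => initTab_of_not_mem hx⟩, initTab_rowColIncreasing hlam⟩

end InitialTableau

section RestrictInitial

variable {l M N : ℕ} {lam : Fin l → ℕ → ℕ}

lemma restShape_initTab (i : ℕ) (c : Fin l) (r : ℕ) :
    restShape l lam (initTab l M lam) i c r = min (lam c r) (i - partialSum l M lam c r) := by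
  have h : (range (lam c r)).filter (fun j => initTab l M lam (c, r, j) ≤ i)
      = range (min (lam c r) (i - partialSum l M lam c r)) := by
    ext j
    simp only [mem_filter, mem_range, lt_min_iff]
    refine and_congr_right fun hj => ?_
    rw [initTab_of_mem (show j < lam c r from hj)]
    dsimp only
    constructor <;> intro <;> omega
  rw [restShape, h, card_range]

lemma restShape_initTab_of_partialSum_le {i : ℕ} {c : Fin l} {r : ℕ}
    (h : partialSum l M lam c (r + 1) ≤ i) :
    restShape l lam (initTab l M lam) i c r = lam c r := by
  have := partialSum_succ (n := M) (lam := lam) c r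
  rw [restShape_initTab]
  omega

lemma partialSum_restShape_initTab (hlam : IsMultipartition l M lam) (hMN : M ≤ N)
    {x : Node l} (hx : x ∈ diag l lam) :
    partialSum l N (restShape l lam (initTab l M lam) (initTab l M lam x)) x.1 x.2.1
      = partialSum l M lam x.1 x.2.1 := by
  have hlt : partialSum l M lam x.1 x.2.1 < initTab l M lam x := by
    rw [initTab_of_mem hx]
    omega
  rw [partialSum_eq_compStart_add, partialSum_eq_compStart_add]
  congr 1
  · refine sum_congr rfl fun i hi => ?_
    have hi' : i < x.1.1 := mem_range.1 hi
    have hil : i < l := hi'.trans x.1.2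
    have hfull : ∀ r, restShape l lam (initTab l M lam) (initTab l M lam x) ⟨i, hil⟩ r
        = lam ⟨i, hil⟩ r := fun r => restShape_initTab_of_partialSum_le (by
      have := partialSum_le hlam ⟨i, hil⟩ (r + 1)
      have := compStart_add_compSize_le_compStart (n := M) (lam := lam)
        (c := ⟨i, hil⟩) (c' := x.1) hi'
      have := compStart_le_partialSum (n := M) (lam := lam) x.1 x.2.1
      omega)
    simp only [compSizeNat, dif_pos hil, compSize, hfull]
    exact sum_range_eq_of_support (hlam.2.1 _) hMN
  · refine sum_congr rfl fun r hr => restShape_initTab_of_partialSum_le ?_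
    have := partialSum_mono (n := M) (lam := lam) x.1 (show r + 1 ≤ x.2.1 from mem_range.1 hr)
    omega

lemma initTab_restShape_initTab (hlam : IsMultipartition l M lam) (hMN : M ≤ N)
    {x : Node l} (hx : x ∈ diag l lam) :
    initTab l N (restShape l lam (initTab l M lam) (initTab l M lam x)) x
      = initTab l M lam x := by
  have hval := initTab_of_mem (n := M) hx
  have hx' : x.2.2 < lam x.1 x.2.1 := hx
  have hmem : x ∈ diag l (restShape l lam (initTab l M lam) (initTab l M lam x)) := by
    show x.2.2 < restShape l lam (initTab l M lam) (initTab l M lam x) x.1 x.2.1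
    rw [restShape_initTab]
    omega
  rw [initTab_of_mem hmem, partialSum_restShape_initTab hlam hMN hx, hval]

end RestrictInitial

section Cut

variable {ℓ : ℕ} (hl : 0 < ℓ) {n : ℕ} {lam : Fin ℓ → ℕ → ℕ} {a : ℕ}

lemma le_lastC (c : Fin ℓ) : c ≤ lastC ℓ hl :=
  Fin.le_def.2 (show c.1 ≤ ℓ - 1 by have := c.2; omega)

lemma sum_filter_lt_lastC_add (g : Fin ℓ → ℕ) :
    ∑ c ∈ univ.filter (· < lastC ℓ hl), g c + g (lastC ℓ hl) = ∑ c, g c := by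
  have hlast : univ.filter (fun c => ¬ c < lastC ℓ hl) = {lastC ℓ hl} := by
    ext c
    simp only [mem_filter, mem_univ, true_and, mem_singleton, not_lt]
    exact ⟨fun h => le_antisymm (le_lastC hl c) h, fun h => h ▸ le_rfl⟩
  rw [← sum_filter_add_sum_filter_not univ (· < lastC ℓ hl), hlast, sum_singleton]

lemma muPart_of_not {c : Fin ℓ} {r : ℕ} (h : ¬(c = lastC ℓ hl ∧ a ≤ r)) :
    muPart ℓ hl lam a c r = lam c r :=
  if_neg h

lemma muPart_of_lt_lastC {c : Fin ℓ} (hc : c < lastC ℓ hl) (r : ℕ) :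
    muPart ℓ hl lam a c r = lam c r :=
  muPart_of_not hl fun h => hc.ne h.1

lemma compSize_le_cutM {c : Fin ℓ} (hc : c < lastC ℓ hl) :
    compSize ℓ n lam c ≤ cutM ℓ n hl lam a :=
  le_add_right (single_le_sum (fun _ _ => Nat.zero_le _) (by simpa using hc))

lemma row_lt_cutM_of_lt_lastC (hlam : IsMultipartition ℓ n lam) {c : Fin ℓ} {r : ℕ}
    (hc : c < lastC ℓ hl) (h : lam c r ≠ 0) : r < cutM ℓ n hl lam a :=
  calc r < r + 1 := r.lt_succ_self
    _ ≤ ∑ i ∈ range (r + 1), lam c i := add_one_le_sum_range_of_antitone (hlam.1 c) h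
    _ ≤ compSize ℓ n lam c := sum_range_le_of_support (hlam.2.1 c) _
    _ ≤ cutM ℓ n hl lam a := compSize_le_cutM hl hc

lemma row_lt_cutM_of_lt (hlam : IsMultipartition ℓ n lam) {r : ℕ} (hr : r < a)
    (h : lam (lastC ℓ hl) r ≠ 0) : r < cutM ℓ n hl lam a :=
  calc r < r + 1 := r.lt_succ_self
    _ ≤ ∑ i ∈ range (r + 1), lam (lastC ℓ hl) i :=
      add_one_le_sum_range_of_antitone (hlam.1 _) h
    _ ≤ ∑ i ∈ range a, lam (lastC ℓ hl) i := sum_range_mono _ hr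
    _ ≤ cutM ℓ n hl lam a := Nat.le_add_left _ _

lemma cutM_le (hlam : IsMultipartition ℓ n lam) : cutM ℓ n hl lam a ≤ n := by
  have h1 : ∑ r ∈ range a, lam (lastC ℓ hl) r ≤ compSize ℓ n lam (lastC ℓ hl) :=
    sum_range_le_of_support (hlam.2.1 _) a
  have h2 := sum_filter_lt_lastC_add hl (compSize ℓ n lam)
  rw [show ∑ c, compSize ℓ n lam c = n from hlam.2.2] at h2
  unfold cutM
  omega

lemma row_lt_cutM_of_muPart_ne_zero (hlam : IsMultipartition ℓ n lam) {c : Fin ℓ} {r : ℕ}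
    (h : muPart ℓ hl lam a c r ≠ 0) : r < cutM ℓ n hl lam a := by
  by_cases hr : c = lastC ℓ hl ∧ a ≤ r
  · exact absurd (if_pos hr) h
  rw [muPart_of_not hl hr] at h
  rcases (le_lastC hl c).lt_or_eq with hc | rfl
  · exact row_lt_cutM_of_lt_lastC hl hlam hc h
  · exact row_lt_cutM_of_lt hl hlam (by omega) h

lemma compSize_muPart (hlam : IsMultipartition ℓ n lam) {c : Fin ℓ} (hc : c < lastC ℓ hl) :
    compSize ℓ (cutM ℓ n hl lam a) (muPart ℓ hl lam a) c = compSize ℓ n lam c := by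
  have hsupp : ∀ r, lam c r ≠ 0 → r < min (cutM ℓ n hl lam a) n :=
    fun r h => lt_min (row_lt_cutM_of_lt_lastC hl hlam hc h) (hlam.2.1 c r h)
  simp only [compSize, muPart_of_lt_lastC hl hc]
  rw [sum_range_eq_of_support hsupp (min_le_left _ _),
    sum_range_eq_of_support hsupp (min_le_right _ _)]

lemma sum_muPart_lastC (hlam : IsMultipartition ℓ n lam) :
    ∑ r ∈ range (cutM ℓ n hl lam a), muPart ℓ hl lam a (lastC ℓ hl) r
      = ∑ r ∈ range a, lam (lastC ℓ hl) r := by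
  have hsupp : ∀ r, muPart ℓ hl lam a (lastC ℓ hl) r ≠ 0 → r < min (cutM ℓ n hl lam a) a :=
    fun r h => lt_min (row_lt_cutM_of_muPart_ne_zero hl hlam h)
      (by by_contra hr; exact h (if_pos ⟨rfl, by omega⟩))
  rw [sum_range_eq_of_support hsupp (min_le_left _ _),
    ← sum_range_eq_of_support hsupp (min_le_right _ _)]
  exact sum_congr rfl fun r hr => muPart_of_not hl fun h => by
    have := mem_range.1 hr
    omega

lemma isMultipartition_muPart (hlam : IsMultipartition ℓ n lam) :
    IsMultipartition ℓ (cutM ℓ n hl lam a) (muPart ℓ hl lam a) := by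
  refine ⟨fun c r r' h => ?_, fun c r => row_lt_cutM_of_muPart_ne_zero hl hlam, ?_⟩
  · by_cases h2 : c = lastC ℓ hl ∧ a ≤ r'
    · rw [muPart, if_pos h2]
      exact Nat.zero_le _
    · rw [muPart_of_not hl h2, muPart_of_not hl fun h1 => h2 ⟨h1.1, h1.2.trans h⟩]
      exact hlam.1 c h
  · show ∑ c, compSize ℓ (cutM ℓ n hl lam a) (muPart ℓ hl lam a) c = cutM ℓ n hl lam a
    rw [← sum_filter_lt_lastC_add hl,
      sum_congr rfl fun c hc => compSize_muPart hl hlam (mem_filter.1 hc).2, compSize,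
      sum_muPart_lastC hl hlam]
    rfl

end Cut

section Extension

variable {ℓ : ℕ} (hl : 0 < ℓ) {n : ℕ} {lam : Fin ℓ → ℕ → ℕ} {a : ℕ}

def gammaNode (a : ℕ) (y : Node 1) : Node ℓ := (lastC ℓ hl, a + y.2.1, y.2.2)

/-- The tableau `u̇` of the paper; the inner `if` keeps it zero off the diagram of `λ`. -/
def extendTab (n : ℕ) (lam : Fin ℓ → ℕ → ℕ) (a : ℕ) (U : Node 1 → ℕ) : Node ℓ → ℕ :=
  fun x =>
    if x.1 = lastC ℓ hl ∧ a ≤ x.2.1 then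
      (if U (0, x.2.1 - a, x.2.2) = 0 then 0 else U (0, x.2.1 - a, x.2.2) + cutM ℓ n hl lam a)
    else initTab ℓ (cutM ℓ n hl lam a) (muPart ℓ hl lam a) x

lemma gammaNode_injective : Function.Injective (gammaNode hl (ℓ := ℓ) a) := by
  rintro ⟨c, r, j⟩ ⟨c', r', j'⟩ h
  simp only [gammaNode, Prod.mk.injEq, true_and, add_right_inj] at h
  rw [Subsingleton.elim c c', h.1, h.2]

lemma gammaNode_sub {r : ℕ} (h : a ≤ r) (j : ℕ) :
    gammaNode hl a ((0, r - a, j) : Node 1) = (lastC ℓ hl, r, j) := by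
  show (lastC ℓ hl, a + (r - a), j) = (lastC ℓ hl, r, j)
  rw [Nat.add_sub_cancel' h]

lemma gammaNode_mem_diag_iff {y : Node 1} :
    gammaNode hl a y ∈ diag ℓ lam ↔ y ∈ diag 1 (gamma1 ℓ hl lam a) :=
  Iff.rfl

lemma mem_diag_muPart_iff {x : Node ℓ} :
    x ∈ diag ℓ (muPart ℓ hl lam a) ↔ x ∈ diag ℓ lam ∧ ¬(x.1 = lastC ℓ hl ∧ a ≤ x.2.1) := by
  show x.2.2 < muPart ℓ hl lam a x.1 x.2.1 ↔ x.2.2 < lam x.1 x.2.1 ∧ _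
  by_cases h : x.1 = lastC ℓ hl ∧ a ≤ x.2.1
  · simp [muPart, h]
  · simp [muPart_of_not hl h, h]

lemma mem_diag_cases {x : Node ℓ} (hx : x ∈ diag ℓ lam) :
    x ∈ diag ℓ (muPart ℓ hl lam a) ∨
      ∃ y ∈ diag 1 (gamma1 ℓ hl lam a), gammaNode hl a y = x := by
  by_cases h : x.1 = lastC ℓ hl ∧ a ≤ x.2.1
  · obtain ⟨c, r, j⟩ := x
    obtain ⟨rfl, har⟩ := h
    refine Or.inr ⟨(0, r - a, j), ?_, gammaNode_sub hl har j⟩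
    rw [← gammaNode_mem_diag_iff hl, gammaNode_sub hl har]
    exact hx
  · exact Or.inl ((mem_diag_muPart_iff hl).2 ⟨hx, h⟩)

lemma extendTab_of_not {U : Node 1 → ℕ} {x : Node ℓ} (h : ¬(x.1 = lastC ℓ hl ∧ a ≤ x.2.1)) :
    extendTab hl n lam a U x = initTab ℓ (cutM ℓ n hl lam a) (muPart ℓ hl lam a) x :=
  if_neg h

lemma extendTab_of_mem_muPart {U : Node 1 → ℕ} {x : Node ℓ}
    (hx : x ∈ diag ℓ (muPart ℓ hl lam a)) :
    extendTab hl n lam a U x = initTab ℓ (cutM ℓ n hl lam a) (muPart ℓ hl lam a) x :=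
  extendTab_of_not hl ((mem_diag_muPart_iff hl).1 hx).2

lemma extendTab_gammaNode {U : Node 1 → ℕ}
    (hU : IsTableau 1 (n - cutM ℓ n hl lam a) (gamma1 ℓ hl lam a) U)
    {y : Node 1} (hy : y ∈ diag 1 (gamma1 ℓ hl lam a)) :
    extendTab hl n lam a U (gammaNode hl a y) = U y + cutM ℓ n hl lam a := by
  obtain ⟨c, r, j⟩ := y
  obtain rfl : c = 0 := Subsingleton.elim _ _
  have hpos := (hU.1.1 hy).1
  simp only [extendTab, gammaNode, le_add_iff_nonneg_right, zero_le, and_self, if_true,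
    add_tsub_cancel_left]
  rw [if_neg (by omega)]

lemma extendTab_of_not_mem {U : Node 1 → ℕ}
    (hU : IsTableau 1 (n - cutM ℓ n hl lam a) (gamma1 ℓ hl lam a) U)
    {x : Node ℓ} (hx : x ∉ diag ℓ lam) : extendTab hl n lam a U x = 0 := by
  by_cases h : x.1 = lastC ℓ hl ∧ a ≤ x.2.1
  · have hy : ((0, x.2.1 - a, x.2.2) : Node 1) ∉ diag 1 (gamma1 ℓ hl lam a) := by
      rw [← gammaNode_mem_diag_iff hl, gammaNode_sub hl h.2, ← h.1]
      exact hx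
    simp only [extendTab, if_pos h, hU.2 _ hy, if_true]
  · rw [extendTab, if_neg h]
    exact initTab_of_not_mem fun hmem => hx ((mem_diag_muPart_iff hl).1 hmem).1

lemma extendTab_mem_Icc_of_mem_muPart (hlam : IsMultipartition ℓ n lam) {U : Node 1 → ℕ}
    {x : Node ℓ} (hx : x ∈ diag ℓ (muPart ℓ hl lam a)) :
    extendTab hl n lam a U x ∈ Set.Icc 1 (cutM ℓ n hl lam a) := by
  rw [extendTab_of_mem_muPart hl hx]
  exact initTab_mem_Icc (isMultipartition_muPart hl hlam) hx

lemma extendTab_gammaNode_mem_Ioc (hlam : IsMultipartition ℓ n lam) {U : Node 1 → ℕ}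
    (hU : IsTableau 1 (n - cutM ℓ n hl lam a) (gamma1 ℓ hl lam a) U)
    {y : Node 1} (hy : y ∈ diag 1 (gamma1 ℓ hl lam a)) :
    extendTab hl n lam a U (gammaNode hl a y) ∈ Set.Ioc (cutM ℓ n hl lam a) n := by
  have := hU.1.1 hy
  have := cutM_le hl (a := a) hlam
  rw [extendTab_gammaNode hl hU hy]
  exact ⟨by simp only [Set.mem_Icc] at *; omega, by simp only [Set.mem_Icc] at *; omega⟩

lemma extendTab_lt_extendTab_gammaNode (hlam : IsMultipartition ℓ n lam) {U : Node 1 → ℕ}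
    (hU : IsTableau 1 (n - cutM ℓ n hl lam a) (gamma1 ℓ hl lam a) U)
    {x : Node ℓ} (hx : x ∈ diag ℓ (muPart ℓ hl lam a))
    {y : Node 1} (hy : y ∈ diag 1 (gamma1 ℓ hl lam a)) :
    extendTab hl n lam a U x < extendTab hl n lam a U (gammaNode hl a y) :=
  (extendTab_mem_Icc_of_mem_muPart hl hlam hx).2.trans_lt
    (extendTab_gammaNode_mem_Ioc hl hlam hU hy).1

lemma bijOn_extendTab (hlam : IsMultipartition ℓ n lam) {U : Node 1 → ℕ}
    (hU : IsTableau 1 (n - cutM ℓ n hl lam a) (gamma1 ℓ hl lam a) U) :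
    Set.BijOn (extendTab hl n lam a U) (diag ℓ lam) (Set.Icc 1 n) := by
  have hmn := cutM_le hl (a := a) hlam
  refine ⟨fun x hx => ?_, fun x hx x' hx' he => ?_, fun k hk => ?_⟩
  · rcases mem_diag_cases hl (a := a) hx with hx | ⟨y, hy, rfl⟩
    · exact Set.Icc_subset_Icc_right hmn (extendTab_mem_Icc_of_mem_muPart hl hlam hx)
    · obtain ⟨h1, h2⟩ := extendTab_gammaNode_mem_Ioc hl hlam hU hy
      exact ⟨by omega, h2⟩
  · rcases mem_diag_cases hl (a := a) hx with hx | ⟨y, hy, rfl⟩ <;>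
      rcases mem_diag_cases hl (a := a) hx' with hx' | ⟨y', hy', rfl⟩
    · rw [extendTab_of_mem_muPart hl hx, extendTab_of_mem_muPart hl hx'] at he
      exact initTab_injOn (isMultipartition_muPart hl hlam) hx hx' he
    · exact absurd he (extendTab_lt_extendTab_gammaNode hl hlam hU hx hy').ne
    · exact absurd he (extendTab_lt_extendTab_gammaNode hl hlam hU hx' hy).ne'
    · rw [extendTab_gammaNode hl hU hy, extendTab_gammaNode hl hU hy'] at he
      exact congrArg _ (hU.1.2.1 hy hy' (Nat.add_right_cancel he))
  · obtain ⟨hk1, hk2⟩ := hk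
    rcases le_or_gt k (cutM ℓ n hl lam a) with hkm | hkm
    · obtain ⟨x, hx, hval⟩ := initTab_surjOn (isMultipartition_muPart hl hlam) ⟨hk1, hkm⟩
      exact ⟨x, ((mem_diag_muPart_iff hl).1 hx).1, (extendTab_of_mem_muPart hl hx).trans hval⟩
    · obtain ⟨y, hy, hval⟩ := hU.1.2.2 (show k - cutM ℓ n hl lam a ∈ Set.Icc 1 _ by
        constructor <;> omega)
      refine ⟨gammaNode hl a y, hy, ?_⟩
      rw [extendTab_gammaNode hl hU hy, hval]
      omega

lemma rowColIncreasing_extendTab (hlam : IsMultipartition ℓ n lam) {U : Node 1 → ℕ}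
    (hU : IsStdTab 1 (n - cutM ℓ n hl lam a) (gamma1 ℓ hl lam a) U) :
    RowColIncreasing ℓ lam (extendTab hl n lam a U) := by
  have hmu := isMultipartition_muPart hl hlam (a := a)
  constructor
  · intro c r j h
    by_cases hreg : c = lastC ℓ hl ∧ a ≤ r
    · obtain ⟨rfl, har⟩ := hreg
      have hγ : j + 1 < gamma1 ℓ hl lam a 0 (r - a) := by
        rwa [gamma1, Nat.add_sub_cancel' har]
      rw [← gammaNode_sub hl har, ← gammaNode_sub hl har,
        extendTab_gammaNode hl hU.2.1 (show j < gamma1 ℓ hl lam a 0 (r - a) by omega),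
        extendTab_gammaNode hl hU.2.1 hγ]
      exact Nat.add_lt_add_right (hU.2.2.1 0 (r - a) j hγ) _
    · have hx : ((c, r, j + 1) : Node ℓ) ∈ diag ℓ (muPart ℓ hl lam a) :=
        (mem_diag_muPart_iff hl).2 ⟨h, hreg⟩
      rw [extendTab_of_mem_muPart hl hx, extendTab_of_mem_muPart hl
        ((mem_diag_muPart_iff hl).2 ⟨show j < lam c r by omega, hreg⟩)]
      exact (initTab_rowColIncreasing hmu).1 c r j hx
  · intro c r j h
    have hr : j < lam c r := h.trans_le (hlam.1 c (Nat.le_succ r))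
    by_cases hreg : c = lastC ℓ hl ∧ a ≤ r + 1
    · obtain ⟨rfl, har⟩ := hreg
      have hγ : j < gamma1 ℓ hl lam a 0 (r + 1 - a) := by
        rwa [gamma1, Nat.add_sub_cancel' har]
      rw [← gammaNode_sub hl har]
      rcases har.lt_or_eq with har | rfl
      · rw [extendTab_gammaNode hl hU.2.1 hγ]
        have hsucc : r + 1 - a = r - a + 1 := by omega
        rw [hsucc] at hγ ⊢
        rw [← gammaNode_sub hl (Nat.le_of_lt_succ har),
          extendTab_gammaNode hl hU.2.1 (show j < gamma1 ℓ hl lam a 0 (r - a) by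
            rw [gamma1, Nat.add_sub_cancel' (Nat.le_of_lt_succ har)]; exact hr)]
        exact Nat.add_lt_add_right (hU.2.2.2 0 (r - a) j hγ) _
      · exact extendTab_lt_extendTab_gammaNode hl hlam hU.2.1 (x := (lastC ℓ hl, r, j))
          ((mem_diag_muPart_iff hl).2 ⟨hr, fun h => Nat.not_succ_le_self r h.2⟩)
          (y := (0, r + 1 - (r + 1), j)) hγ
    · have hx : ((c, r + 1, j) : Node ℓ) ∈ diag ℓ (muPart ℓ hl lam a) :=
        (mem_diag_muPart_iff hl).2 ⟨h, hreg⟩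
      rw [extendTab_of_mem_muPart hl hx, extendTab_of_mem_muPart hl
        ((mem_diag_muPart_iff hl).2 ⟨hr, fun h => hreg ⟨h.1, Nat.le_succ_of_le h.2⟩⟩)]
      exact (initTab_rowColIncreasing hmu).2 c r j hx

lemma isStdTab_extendTab (hlam : IsMultipartition ℓ n lam) {U : Node 1 → ℕ}
    (hU : IsStdTab 1 (n - cutM ℓ n hl lam a) (gamma1 ℓ hl lam a) U) :
    IsStdTab ℓ n lam (extendTab hl n lam a U) :=
  ⟨hlam, ⟨bijOn_extendTab hl hlam hU.2.1, fun _ hx => extendTab_of_not_mem hl hU.2.1 hx⟩,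
    rowColIncreasing_extendTab hl hlam hU⟩

end Extension

section InitialTableauOfCut

variable {ℓ : ℕ} (hl : 0 < ℓ) {n : ℕ} {lam : Fin ℓ → ℕ → ℕ} {a : ℕ}

lemma initTab_of_mem_muPart (hlam : IsMultipartition ℓ n lam) {x : Node ℓ}
    (hx : x ∈ diag ℓ (muPart ℓ hl lam a)) :
    initTab ℓ n lam x = initTab ℓ (cutM ℓ n hl lam a) (muPart ℓ hl lam a) x := by
  obtain ⟨hxlam, hreg⟩ := (mem_diag_muPart_iff hl).1 hx
  rw [initTab_of_mem hxlam, initTab_of_mem hx]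
  congr 2
  unfold partialSum
  congr 1
  · exact sum_congr rfl fun c hc =>
      (compSize_muPart hl hlam ((mem_filter.1 hc).2.trans_le (le_lastC hl x.1))).symm
  · refine sum_congr rfl fun r hr => (muPart_of_not hl fun h => hreg ⟨h.1, ?_⟩).symm
    have := mem_range.1 hr
    omega

lemma initTab_gammaNode_of_eq {N' : ℕ} {σ : Fin ℓ → ℕ → ℕ} {τ : Fin 1 → ℕ → ℕ}
    (hσ : ∀ c r, ¬(c = lastC ℓ hl ∧ a ≤ r) → σ c r = lam c r)
    (hστ : ∀ s, σ (lastC ℓ hl) (a + s) = τ 0 s) {y : Node 1} (hy : y ∈ diag 1 τ) :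
    initTab ℓ n σ (gammaNode hl a y) = initTab 1 N' τ y + cutM ℓ n hl lam a := by
  obtain ⟨c, r, j⟩ := y
  obtain rfl : c = 0 := Subsingleton.elim _ _
  have hmem : gammaNode hl a ((0, r, j) : Node 1) ∈ diag ℓ σ :=
    show j < σ (lastC ℓ hl) (a + r) by rw [hστ]; exact hy
  have hstart : compStart ℓ n σ (lastC ℓ hl) = compStart ℓ n lam (lastC ℓ hl) :=
    sum_congr rfl fun i hi => by
      have hil : i < ℓ := (mem_range.1 hi).trans (lastC ℓ hl).2
      simp only [compSizeNat, dif_pos hil, compSize]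
      exact sum_congr rfl fun r _ => hσ _ r fun h =>
        (mem_range.1 hi).ne (congrArg Fin.val h.1)
  have hrows : ∑ r ∈ range a, σ (lastC ℓ hl) r = ∑ r ∈ range a, lam (lastC ℓ hl) r :=
    sum_congr rfl fun r hr => hσ _ r fun h => by have := mem_range.1 hr; omega
  have hcut : cutM ℓ n hl lam a = partialSum ℓ n lam (lastC ℓ hl) a := rfl
  rw [initTab_of_mem hmem, initTab_of_mem hy, hcut]
  simp only [partialSum_eq_compStart_add, gammaNode, sum_range_add, hστ, hrows, hstart]
  simp only [compStart, Fin.val_zero, sum_range_zero]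
  ring

lemma initTab_gammaNode {y : Node 1} (hy : y ∈ diag 1 (gamma1 ℓ hl lam a)) :
    initTab ℓ n lam (gammaNode hl a y)
      = initTab 1 (n - cutM ℓ n hl lam a) (gamma1 ℓ hl lam a) y + cutM ℓ n hl lam a :=
  initTab_gammaNode_of_eq hl (fun _ _ _ => rfl) (fun _ => rfl) hy

lemma initTab_eq_extendTab (hlam : IsMultipartition ℓ n lam)
    (hγ : IsMultipartition 1 (n - cutM ℓ n hl lam a) (gamma1 ℓ hl lam a)) :
    initTab ℓ n lam
      = extendTab hl n lam a (initTab 1 (n - cutM ℓ n hl lam a) (gamma1 ℓ hl lam a)) := by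
  have hγt := (isStdTab_initTab hγ).2.1
  funext x
  by_cases hx : x ∈ diag ℓ lam
  · rcases mem_diag_cases hl (a := a) hx with hx | ⟨y, hy, rfl⟩
    · rw [extendTab_of_mem_muPart hl hx, initTab_of_mem_muPart hl hlam hx]
    · rw [extendTab_gammaNode hl hγt hy, initTab_gammaNode hl hy]
  · rw [initTab_of_not_mem hx, extendTab_of_not_mem hl hγt hx]

lemma restShape_extendTab_of_le (hlam : IsMultipartition ℓ n lam) {U : Node 1 → ℕ}
    (hU : IsTableau 1 (n - cutM ℓ n hl lam a) (gamma1 ℓ hl lam a) U)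
    {k : ℕ} (hk : k ≤ cutM ℓ n hl lam a) :
    restShape ℓ lam (extendTab hl n lam a U) k
      = restShape ℓ (muPart ℓ hl lam a) (initTab ℓ (cutM ℓ n hl lam a) (muPart ℓ hl lam a)) k := by
  funext c r
  unfold restShape
  by_cases hreg : c = lastC ℓ hl ∧ a ≤ r
  · obtain ⟨rfl, har⟩ := hreg
    rw [muPart, if_pos ⟨rfl, har⟩, range_zero, filter_empty, card_empty, card_eq_zero,
      filter_eq_empty_iff]
    intro j hj
    have hy : ((0, r - a, j) : Node 1) ∈ diag 1 (gamma1 ℓ hl lam a) := by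
      rw [← gammaNode_mem_diag_iff hl, gammaNode_sub hl har]
      exact mem_range.1 hj
    have := (extendTab_gammaNode_mem_Ioc hl hlam hU hy).1
    rw [gammaNode_sub hl har] at this
    omega
  · rw [muPart_of_not hl hreg]
    exact congrArg card (filter_congr fun j _ => by rw [extendTab_of_not hl hreg])

lemma restShape_extendTab_add_of_not (hlam : IsMultipartition ℓ n lam) {U : Node 1 → ℕ}
    {k : ℕ} {c : Fin ℓ} {r : ℕ} (hreg : ¬(c = lastC ℓ hl ∧ a ≤ r)) :
    restShape ℓ lam (extendTab hl n lam a U) (cutM ℓ n hl lam a + k) c r = lam c r := by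
  unfold restShape
  rw [filter_true_of_mem fun j hj => ?_, card_range]
  have := (extendTab_mem_Icc_of_mem_muPart hl hlam (U := U) (x := (c, r, j))
    ((mem_diag_muPart_iff hl).2 ⟨mem_range.1 hj, hreg⟩)).2
  omega

lemma restShape_extendTab_lastC_add {U : Node 1 → ℕ}
    (hU : IsTableau 1 (n - cutM ℓ n hl lam a) (gamma1 ℓ hl lam a) U) (k s : ℕ) :
    restShape ℓ lam (extendTab hl n lam a U) (cutM ℓ n hl lam a + k) (lastC ℓ hl) (a + s)
      = restShape 1 (gamma1 ℓ hl lam a) U k 0 s := by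
  refine congrArg card (filter_congr fun j hj => ?_)
  have hy : ((0, s, j) : Node 1) ∈ diag 1 (gamma1 ℓ hl lam a) := mem_range.1 hj
  rw [show ((lastC ℓ hl, a + s, j) : Node ℓ) = gammaNode hl a (0, s, j) from rfl,
    extendTab_gammaNode hl hU hy]
  omega

lemma initTab_restShape_extendTab_gammaNode (hlam : IsMultipartition ℓ n lam)
    {U : Node 1 → ℕ} (hU : IsTableau 1 (n - cutM ℓ n hl lam a) (gamma1 ℓ hl lam a) U)
    {k : ℕ} {y : Node 1} (hy : y ∈ diag 1 (restShape 1 (gamma1 ℓ hl lam a) U k)) :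
    initTab ℓ n (restShape ℓ lam (extendTab hl n lam a U) (cutM ℓ n hl lam a + k))
        (gammaNode hl a y)
      = initTab 1 (n - cutM ℓ n hl lam a) (restShape 1 (gamma1 ℓ hl lam a) U k) y
        + cutM ℓ n hl lam a :=
  initTab_gammaNode_of_eq hl (fun _ _ hreg => restShape_extendTab_add_of_not hl hlam hreg)
    (restShape_extendTab_lastC_add hl hU k) hy

end InitialTableauOfCut

section Words

variable {l N : ℕ} {lamf : Fin l → ℕ → ℕ} {U : Node l → ℕ}

lemma IsStdTab.row_le (hU : IsStdTab l N lamf U) (c : Fin l) (r : ℕ) {j j' : ℕ}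
    (hj : j ≤ j') (hj' : j' < lamf c r) : U (c, r, j) ≤ U (c, r, j') := by
  induction j', hj using Nat.le_induction with
  | base => exact le_rfl
  | succ j' _ ih => exact (ih (by omega)).trans (hU.2.2.1 c r j' hj').le

lemma IsStdTab.mem_diag_restShape (hU : IsStdTab l N lamf U) {y : Node l}
    (hy : y ∈ diag l lamf) : y ∈ diag l (restShape l lamf U (U y)) := by
  have hsub : range (y.2.2 + 1) ⊆ (range (lamf y.1 y.2.1)).filter
      (fun j => U (y.1, y.2.1, j) ≤ U y) := fun j hj => by
    have hy' : y.2.2 < lamf y.1 y.2.1 := hy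
    have hj' : j ≤ y.2.2 := Nat.lt_succ_iff.1 (mem_range.1 hj)
    exact mem_filter.2 ⟨mem_range.2 (by omega), hU.row_le y.1 y.2.1 hj' hy'⟩
  exact (card_range (y.2.2 + 1)).ge.trans (card_le_card hsub)

lemma IsStdTab.aEntry_apply (hU : IsStdTab l N lamf U) {y : Node l} (hy : y ∈ diag l lamf) :
    aEntry l N lamf U (U y) = initTab l N (restShape l lamf U (U y)) y := by
  have hex : ∃ x, x ∈ diag l lamf ∧ U x = U y := ⟨y, hy, rfl⟩
  have hch := hex.choose_spec
  rw [aEntry, dif_pos hex, hU.2.1.1.2.1 hch.1 hy hch.2, interT, if_neg (by omega),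
    Nat.add_sub_cancel]

lemma aEntry_of_not_exists {k : ℕ} (h : ¬ ∃ x, x ∈ diag l lamf ∧ U x = k) :
    aEntry l N lamf U k = k :=
  dif_neg h

lemma IsStdTab.mem_stdWord (hU : IsStdTab l N lamf U) {r : ℕ}
    (hr : r ∈ stdWord l N lamf U) : 1 ≤ r ∧ r < N := by
  simp only [stdWord, List.mem_flatten, List.mem_map, List.mem_reverse, List.mem_range] at hr
  obtain ⟨_, ⟨k, hk, rfl⟩, hr⟩ := hr
  rw [wordAt, List.mem_range'_1] at hr
  by_cases hex : ∃ x, x ∈ diag l lamf ∧ U x = k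
  · obtain ⟨y, hy, rfl⟩ := hex
    have := (hU.2.1.1.1 hy).2
    have := one_le_initTab (n := N) (hU.mem_diag_restShape hy)
    rw [hU.aEntry_apply hy] at hr
    omega
  · rw [aEntry_of_not_exists hex] at hr
    omega

end Words

section WordsOfExtension

variable {ℓ : ℕ} (hl : 0 < ℓ) {n : ℕ} {lam : Fin ℓ → ℕ → ℕ} {a : ℕ}
  {U : Node 1 → ℕ}

lemma aEntry_extendTab_of_le (hlam : IsMultipartition ℓ n lam)
    (hU : IsStdTab 1 (n - cutM ℓ n hl lam a) (gamma1 ℓ hl lam a) U)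
    {i : ℕ} (hi : i ≤ cutM ℓ n hl lam a) :
    aEntry ℓ n lam (extendTab hl n lam a U) i = i := by
  by_cases hex : ∃ x, x ∈ diag ℓ lam ∧ extendTab hl n lam a U x = i
  · obtain ⟨x, hx, rfl⟩ := hex
    rcases mem_diag_cases hl (a := a) hx with hxμ | ⟨y, hy, rfl⟩
    · rw [(isStdTab_extendTab hl hlam hU).aEntry_apply hx,
        restShape_extendTab_of_le hl hlam hU.2.1 hi, extendTab_of_mem_muPart hl hxμ]
      exact initTab_restShape_initTab (isMultipartition_muPart hl hlam) (cutM_le hl hlam) hxμ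
    · exact absurd hi (extendTab_gammaNode_mem_Ioc hl hlam hU.2.1 hy).1.not_ge
  · exact aEntry_of_not_exists hex

lemma aEntry_extendTab_add (hlam : IsMultipartition ℓ n lam)
    (hU : IsStdTab 1 (n - cutM ℓ n hl lam a) (gamma1 ℓ hl lam a) U)
    {k : ℕ} (hk1 : 1 ≤ k) (hk2 : k ≤ n - cutM ℓ n hl lam a) :
    aEntry ℓ n lam (extendTab hl n lam a U) (cutM ℓ n hl lam a + k)
      = cutM ℓ n hl lam a + aEntry 1 (n - cutM ℓ n hl lam a) (gamma1 ℓ hl lam a) U k := by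
  obtain ⟨y, hy, rfl⟩ := hU.2.1.1.2.2 ⟨hk1, hk2⟩
  have hval := extendTab_gammaNode hl hU.2.1 hy
  rw [add_comm, ← hval, (isStdTab_extendTab hl hlam hU).aEntry_apply hy, hval, add_comm,
    initTab_restShape_extendTab_gammaNode hl hlam hU.2.1 (hU.mem_diag_restShape hy),
    hU.aEntry_apply hy, add_comm]

lemma wordAt_extendTab_of_le (hlam : IsMultipartition ℓ n lam)
    (hU : IsStdTab 1 (n - cutM ℓ n hl lam a) (gamma1 ℓ hl lam a) U)
    {i : ℕ} (hi : i ≤ cutM ℓ n hl lam a) :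
    wordAt ℓ n lam (extendTab hl n lam a U) i = [] := by
  rw [wordAt, aEntry_extendTab_of_le hl hlam hU hi, Nat.sub_self, List.range'_zero]

lemma wordAt_extendTab_add (hlam : IsMultipartition ℓ n lam)
    (hU : IsStdTab 1 (n - cutM ℓ n hl lam a) (gamma1 ℓ hl lam a) U)
    {k : ℕ} (hk : k ≤ n - cutM ℓ n hl lam a) :
    wordAt ℓ n lam (extendTab hl n lam a U) (cutM ℓ n hl lam a + k)
      = (wordAt 1 (n - cutM ℓ n hl lam a) (gamma1 ℓ hl lam a) U k).map
          (cutM ℓ n hl lam a + ·) := by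
  rcases Nat.eq_zero_or_pos k with rfl | hk1
  · have h0 : aEntry 1 (n - cutM ℓ n hl lam a) (gamma1 ℓ hl lam a) U 0 = 0 :=
      aEntry_of_not_exists fun ⟨y, hy, hy0⟩ => by have := (hU.2.1.1.1 hy).1; omega
    rw [Nat.add_zero, wordAt_extendTab_of_le hl hlam hU le_rfl, wordAt, h0]
    rfl
  · rw [wordAt, wordAt, aEntry_extendTab_add hl hlam hU hk1 hk, Nat.add_sub_add_left,
      List.map_add_range']

lemma stdWord_extendTab (hlam : IsMultipartition ℓ n lam)
    (hU : IsStdTab 1 (n - cutM ℓ n hl lam a) (gamma1 ℓ hl lam a) U) :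
    stdWord ℓ n lam (extendTab hl n lam a U)
      = (stdWord 1 (n - cutM ℓ n hl lam a) (gamma1 ℓ hl lam a) U).map
          (cutM ℓ n hl lam a + ·) := by
  have hmn := cutM_le hl (a := a) hlam
  have hlow : ((List.range (cutM ℓ n hl lam a)).reverse.map
      (wordAt ℓ n lam (extendTab hl n lam a U))).flatten = [] :=
    List.flatten_eq_nil_iff.2 fun w hw => by
      obtain ⟨i, hi, rfl⟩ := List.mem_map.1 hw
      exact wordAt_extendTab_of_le hl hlam hU
        (List.mem_range.1 (List.mem_reverse.1 hi)).le
  unfold stdWord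
  rw [show n + 1 = cutM ℓ n hl lam a + (n - cutM ℓ n hl lam a + 1) by omega,
    List.range_add, List.reverse_append, List.map_append, List.flatten_append, hlow,
    List.append_nil, List.map_flatten, List.map_map, ← List.map_reverse, List.map_map]
  congr 1
  refine List.map_congr_left fun k hk => ?_
  exact wordAt_extendTab_add hl hlam hU
    (Nat.lt_succ_iff.1 (List.mem_range.1 (List.mem_reverse.1 hk)))

end WordsOfExtension

section Residues

variable (e : ℕ) {l : ℕ} (κ : Fin l → ZMod e) {lamf : Fin l → ℕ → ℕ} {T : Node l → ℕ}

lemma resAt_apply_of_injOn (hinj : Set.InjOn T (diag l lamf)) {x : Node l}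
    (hx : x ∈ diag l lamf) : resAt e κ lamf T (T x) = res e κ x := by
  have hex : ∃ y, y ∈ diag l lamf ∧ T y = T x := ⟨x, hx, rfl⟩
  rw [resAt, dif_pos hex, hinj hex.choose_spec.1 hx hex.choose_spec.2]

lemma addSet_apply_of_injOn (hinj : Set.InjOn T (diag l lamf)) {y : Node l}
    (hy : y ∈ diag l lamf) :
    addSet e κ lamf T (T y)
      = {x | IsAddable (restShape l lamf T (T y)) x ∧ Below x y ∧ res e κ x = res e κ y} := by
  ext x
  refine and_congr_right fun _ => ⟨fun h => h y hy rfl, ?_⟩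
  rintro h y' hy' hval
  rwa [hinj hy' hy hval]

end Residues

section ResiduesOfCut

variable (e : ℕ) {ℓ : ℕ} (hl : 0 < ℓ) {n : ℕ} {lam : Fin ℓ → ℕ → ℕ} {a : ℕ}
  (κ : Fin ℓ → ZMod e)

lemma res_gammaNode (y : Node 1) :
    res e κ (gammaNode hl a y) = res e (kappa1 e ℓ hl κ a) y := by
  simp only [res, gammaNode, kappa1, cutRes, Nat.cast_add, Nat.cast_zero]
  ring

lemma below_gammaNode_iff {x : Node ℓ} {y : Node 1} :
    Below x (gammaNode hl a y) ↔ x.1 = lastC ℓ hl ∧ a + y.2.1 < x.2.1 := by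
  simp only [Below, gammaNode, (le_lastC hl x.1).not_gt, false_or, eq_comm]

lemma below_iff_of_level_one {y y' : Node 1} : Below y y' ↔ y'.2.1 < y.2.1 := by
  simp [Below, Subsingleton.elim y.1 y'.1]

lemma isAddable_restShape_extendTab_gammaNode_iff {U : Node 1 → ℕ}
    (hU : IsTableau 1 (n - cutM ℓ n hl lam a) (gamma1 ℓ hl lam a) U) {k : ℕ} {y : Node 1}
    (hy : 1 ≤ y.2.1) :
    IsAddable (restShape ℓ lam (extendTab hl n lam a U) (cutM ℓ n hl lam a + k))
        (gammaNode hl a y)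
      ↔ IsAddable (restShape 1 (gamma1 ℓ hl lam a) U k) y := by
  obtain ⟨c, r, j⟩ := y
  obtain rfl : c = 0 := Subsingleton.elim _ _
  have hy' : 1 ≤ r := hy
  have hr : a + r - 1 = a + (r - 1) := by omega
  simp only [IsAddable, gammaNode, hr, restShape_extendTab_lastC_add hl hU,
    show a + r ≠ 0 by omega, show r ≠ 0 by omega, false_or]

lemma resAt_initTab_of_le (hlam : IsMultipartition ℓ n lam) {k : ℕ} (hk1 : 1 ≤ k)
    (hk : k ≤ cutM ℓ n hl lam a) :
    resAt e κ lam (initTab ℓ n lam) k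
      = resAt e κ (muPart ℓ hl lam a) (initTab ℓ (cutM ℓ n hl lam a) (muPart ℓ hl lam a)) k := by
  have hmu := isMultipartition_muPart hl (a := a) hlam
  obtain ⟨x, hx, rfl⟩ := initTab_surjOn hmu ⟨hk1, hk⟩
  rw [resAt_apply_of_injOn e κ (initTab_injOn hmu) hx, ← initTab_of_mem_muPart hl hlam hx,
    resAt_apply_of_injOn e κ (initTab_injOn hlam) ((mem_diag_muPart_iff hl).1 hx).1]

lemma resAt_initTab_cutM_add (hlam : IsMultipartition ℓ n lam)
    (hγ : IsMultipartition 1 (n - cutM ℓ n hl lam a) (gamma1 ℓ hl lam a)) {k : ℕ} (hk1 : 1 ≤ k)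
    (hk2 : k ≤ n - cutM ℓ n hl lam a) :
    resAt e κ lam (initTab ℓ n lam) (cutM ℓ n hl lam a + k)
      = resAt e (kappa1 e ℓ hl κ a) (gamma1 ℓ hl lam a)
          (initTab 1 (n - cutM ℓ n hl lam a) (gamma1 ℓ hl lam a)) k := by
  obtain ⟨y, hy, rfl⟩ := initTab_surjOn hγ ⟨hk1, hk2⟩
  rw [add_comm, ← initTab_gammaNode hl hy, resAt_apply_of_injOn e κ (initTab_injOn hlam) hy,
    res_gammaNode, resAt_apply_of_injOn e _ (initTab_injOn hγ) hy]

lemma addCount_initTab_of_le (hlam : IsMultipartition ℓ n lam)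
    (hγ : IsMultipartition 1 (n - cutM ℓ n hl lam a) (gamma1 ℓ hl lam a)) {k : ℕ} (hk1 : 1 ≤ k)
    (hk : k ≤ cutM ℓ n hl lam a) :
    addCount e κ lam (initTab ℓ n lam) k
      = addCount e κ (muPart ℓ hl lam a)
          (initTab ℓ (cutM ℓ n hl lam a) (muPart ℓ hl lam a)) k := by
  have hmu := isMultipartition_muPart hl (a := a) hlam
  have hshape : restShape ℓ lam (initTab ℓ n lam) k
      = restShape ℓ (muPart ℓ hl lam a) (initTab ℓ (cutM ℓ n hl lam a) (muPart ℓ hl lam a)) k := by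
    rw [initTab_eq_extendTab hl hlam hγ]
    exact restShape_extendTab_of_le hl hlam (isStdTab_initTab hγ).2.1 hk
  obtain ⟨x, hx, rfl⟩ := initTab_surjOn hmu ⟨hk1, hk⟩
  rw [addCount, addCount, addSet_apply_of_injOn e κ (initTab_injOn hmu) hx, ← hshape,
    ← initTab_of_mem_muPart hl hlam hx,
    addSet_apply_of_injOn e κ (initTab_injOn hlam) ((mem_diag_muPart_iff hl).1 hx).1]

lemma addSet_initTab_cutM_add (hlam : IsMultipartition ℓ n lam)
    (hγ : IsMultipartition 1 (n - cutM ℓ n hl lam a) (gamma1 ℓ hl lam a)) {k : ℕ} (hk1 : 1 ≤ k)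
    (hk2 : k ≤ n - cutM ℓ n hl lam a) :
    addSet e κ lam (initTab ℓ n lam) (cutM ℓ n hl lam a + k)
      = gammaNode hl a '' addSet e (kappa1 e ℓ hl κ a) (gamma1 ℓ hl lam a)
          (initTab 1 (n - cutM ℓ n hl lam a) (gamma1 ℓ hl lam a)) k := by
  have hG := (isStdTab_initTab hγ).2.1
  obtain ⟨y, hy, rfl⟩ := initTab_surjOn hγ ⟨hk1, hk2⟩
  rw [addSet_apply_of_injOn e _ (initTab_injOn hγ) hy, add_comm, ← initTab_gammaNode hl hy,
    addSet_apply_of_injOn e κ (initTab_injOn hlam) hy, initTab_gammaNode hl hy, add_comm,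
    initTab_eq_extendTab hl hlam hγ]
  ext x
  simp only [Set.mem_ofPred_eq, Set.mem_image, below_gammaNode_iff, below_iff_of_level_one,
    res_gammaNode]
  constructor
  · rintro ⟨hadd, ⟨hx1, hx2⟩, hres⟩
    obtain ⟨c, r, j⟩ := x
    obtain rfl := hx1
    have har : a ≤ r := by dsimp only at hx2; omega
    refine ⟨(0, r - a, j), ⟨?_, ?_, ?_⟩, gammaNode_sub hl har j⟩
    · rw [← isAddable_restShape_extendTab_gammaNode_iff hl hG (by dsimp only at hx2 ⊢; omega),
        gammaNode_sub hl har]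
      exact hadd
    · dsimp only at hx2 ⊢
      omega
    · rwa [← res_gammaNode e hl κ, gammaNode_sub hl har]
  · rintro ⟨z, ⟨hadd, hbel, hres⟩, rfl⟩
    exact ⟨(isAddable_restShape_extendTab_gammaNode_iff hl hG (by omega)).2 hadd,
      ⟨rfl, by simp only [gammaNode]; omega⟩, by rwa [res_gammaNode]⟩

lemma addCount_initTab_cutM_add (hlam : IsMultipartition ℓ n lam)
    (hγ : IsMultipartition 1 (n - cutM ℓ n hl lam a) (gamma1 ℓ hl lam a)) {k : ℕ} (hk1 : 1 ≤ k)
    (hk2 : k ≤ n - cutM ℓ n hl lam a) :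
    addCount e κ lam (initTab ℓ n lam) (cutM ℓ n hl lam a + k)
      = addCount e (kappa1 e ℓ hl κ a) (gamma1 ℓ hl lam a)
          (initTab 1 (n - cutM ℓ n hl lam a) (gamma1 ℓ hl lam a)) k := by
  rw [addCount, addSet_initTab_cutM_add e hl κ hlam hγ hk1 hk2,
    Set.ncard_image_of_injective _ (gammaNode_injective hl)]
  rfl

end ResiduesOfCut

section ShiftEmbedding

variable {e n : ℕ} {Λ : ZMod e →₀ ℕ}

lemma cy_commute (r s : Fin n) : Commute (cy e n Λ r) (cy e n Λ s) := by
  simp only [Commute, SemiconjBy, cy, ay, ← map_mul]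
  exact congrArg _ (RingQuot.mkRingHom_rel (Rel.dot_dot r s))

lemma cpsi_commute_cy (r : Fin (n - 1)) (k : Fin n) (h1 : k ≠ lo r) (h2 : k ≠ hi r) :
    Commute (cpsi e n Λ r) (cy e n Λ k) := by
  simp only [Commute, SemiconjBy, cpsi, cy, apsi, ay, ← map_mul]
  exact congrArg _ (RingQuot.mkRingHom_rel (Rel.cross_dot r k h1 h2))

lemma commute_dite_cy_pow {p q : Prop} [Decidable p] [Decidable q] (f : p → Fin n)
    (g : q → Fin n) (A B : ℕ) :
    Commute (if h : p then cy e n Λ (f h) ^ A else 1)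
      (if h : q then cy e n Λ (g h) ^ B else 1) := by
  split_ifs
  · exact (cy_commute _ _).pow_pow A B
  all_goals simp

lemma cpsiOf_commute_cy {m r : ℕ} (hr : m + 1 ≤ r) {k : Fin n} (hk : k.1 < m) :
    Commute (cpsiOf e n Λ r) (cy e n Λ k) := by
  unfold cpsiOf
  split_ifs
  · exact cpsi_commute_cy _ _ (Fin.ne_of_val_ne (by simp only [lo]; omega))
      (Fin.ne_of_val_ne (by simp only [hi]; omega))
  · exact Commute.one_left _

lemma psiWord_commute_yEl {l m : ℕ} (κ : Fin l → ZMod e) (lamf : Fin l → ℕ → ℕ) {L : List ℕ}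
    (hL : ∀ r ∈ L, m + 1 ≤ r) :
    Commute (psiWord e n Λ L) (yEl e n Λ κ lamf m) := by
  refine Commute.list_prod_left _ _ fun x hx => Commute.list_prod_right _ _ fun y hy => ?_
  obtain ⟨r, hr, rfl⟩ := List.mem_map.1 hx
  obtain ⟨j, hj, rfl⟩ := List.mem_map.1 hy
  split_ifs with hjn
  · exact (cpsiOf_commute_cy (hL r hr) (show j < m from List.mem_range.1 hj)).pow_right _
  · exact Commute.one_right _

/-- `θ̂_j(ŷ_γ)`, see `thetaFree_fyEl`. -/
def yShift (e n : ℕ) (Λ : ZMod e →₀ ℕ) {l : ℕ} (κ : Fin l → ZMod e) (lamf : Fin l → ℕ → ℕ)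
    (m : ℕ) : CKLR e n Λ :=
  ((List.range (n - m)).map fun j =>
    if h : j + m < n then
      cy e n Λ ⟨j + m, h⟩ ^ addCount e κ lamf (initTab l (n - m) lamf) (j + 1)
    else 1).prod

lemma yShift_commute_yEl {l l' m : ℕ} (κ : Fin l → ZMod e) (lamf : Fin l → ℕ → ℕ)
    (κ' : Fin l' → ZMod e) (lamf' : Fin l' → ℕ → ℕ) (m' : ℕ) :
    Commute (yShift e n Λ κ lamf m) (yEl e n Λ κ' lamf' m') := by
  refine Commute.list_prod_left _ _ fun x hx => Commute.list_prod_right _ _ fun y hy => ?_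
  obtain ⟨j, -, rfl⟩ := List.mem_map.1 hx
  obtain ⟨j', -, rfl⟩ := List.mem_map.1 hy
  exact commute_dite_cy_pow _ _ _ _

variable (m : ℕ) (j : Fin m → ZMod e)

lemma thetaFree_fe (i : Fin (n - m) → ZMod e) :
    thetaFree e n Λ m j (fe i) = ce e n Λ (fun x : Fin n =>
      if hx : x.1 < m then j ⟨x.1, hx⟩ else i ⟨x.1 - m, by have := x.2; omega⟩) :=
  FreeAlgebra.lift_ι_apply _ _

lemma thetaFree_fy (r : Fin (n - m)) :
    thetaFree e n Λ m j (fy r) = if hr : r.1 + m < n then cy e n Λ ⟨r.1 + m, hr⟩ else 1 :=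
  FreeAlgebra.lift_ι_apply _ _

lemma thetaFree_fpsi (r : Fin (n - m - 1)) :
    thetaFree e n Λ m j (fpsi r)
      = if hr : r.1 + m < n - 1 then cpsi e n Λ ⟨r.1 + m, hr⟩ else 1 :=
  FreeAlgebra.lift_ι_apply _ _

lemma thetaFree_fpsiOf {r : ℕ} (h1 : 1 ≤ r) (h2 : r < n - m) :
    thetaFree e n Λ m j (fpsiOf e (n - m) r) = cpsiOf e n Λ (m + r) := by
  rw [fpsiOf, cpsiOf, dif_pos ⟨h1, h2⟩, dif_pos (show 1 ≤ m + r ∧ m + r < n by omega),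
    thetaFree_fpsi, dif_pos (show r - 1 + m < n - 1 by omega)]
  exact congrArg _ (Fin.ext (by simp only; omega))

lemma thetaFree_fPsiWord {L : List ℕ} (hL : ∀ r ∈ L, 1 ≤ r ∧ r < n - m) :
    thetaFree e n Λ m j (fPsiWord e (n - m) L) = psiWord e n Λ (L.map (m + ·)) := by
  simp only [fPsiWord, psiWord, map_list_prod, List.map_map]
  congr 1
  exact List.map_congr_left fun r hr => thetaFree_fpsiOf m j (hL r hr).1 (hL r hr).2

lemma thetaFree_fyEl {l : ℕ} (κ : Fin l → ZMod e) (lamf : Fin l → ℕ → ℕ) :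
    thetaFree e n Λ m j (fyEl e (n - m) κ lamf (n - m)) = yShift e n Λ κ lamf m := by
  simp only [fyEl, yShift, map_list_prod, List.map_map]
  congr 1
  refine List.map_congr_left fun i hi => ?_
  have hi := List.mem_range.1 hi
  simp only [Function.comp, dif_pos hi, map_pow, thetaFree_fy, dif_pos (show i + m < n by omega)]

end ShiftEmbedding

section Assembly

variable (e : ℕ) {ℓ : ℕ} (hl : 0 < ℓ) {n : ℕ} {lam : Fin ℓ → ℕ → ℕ} {a : ℕ}
  (Λ : ZMod e →₀ ℕ) (κ : Fin ℓ → ZMod e)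

/-- `i_λ = i_μ ∨ i_γ`, where `γ` carries the multicharge of `Λ'`. -/
lemma resSeqT_initTab_eq_concat (hlam : IsMultipartition ℓ n lam)
    (hγ : IsMultipartition 1 (n - cutM ℓ n hl lam a) (gamma1 ℓ hl lam a)) :
    (fun x : Fin n => if hx : x.1 < cutM ℓ n hl lam a then
        resSeqT e (cutM ℓ n hl lam a) κ (muPart ℓ hl lam a)
          (initTab ℓ (cutM ℓ n hl lam a) (muPart ℓ hl lam a)) ⟨x.1, hx⟩
      else resAt e (kappa1 e ℓ hl κ a) (gamma1 ℓ hl lam a)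
          (initTab 1 (n - cutM ℓ n hl lam a) (gamma1 ℓ hl lam a))
          (x.1 - cutM ℓ n hl lam a + 1))
      = resSeqT e n κ lam (initTab ℓ n lam) := by
  funext x
  split_ifs with hx
  · exact (resAt_initTab_of_le e hl κ hlam (Nat.le_add_left 1 x.1) hx).symm
  · have := x.2
    rw [← resAt_initTab_cutM_add e hl κ hlam hγ (Nat.le_add_left 1 _) (by omega),
      show cutM ℓ n hl lam a + (x.1 - cutM ℓ n hl lam a + 1) = x.1 + 1 by omega]
    rfl

lemma yEl_eq_mul_yShift (hlam : IsMultipartition ℓ n lam)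
    (hγ : IsMultipartition 1 (n - cutM ℓ n hl lam a) (gamma1 ℓ hl lam a)) :
    yEl e n Λ κ lam n
      = yEl e n Λ κ (muPart ℓ hl lam a) (cutM ℓ n hl lam a)
        * yShift e n Λ (kappa1 e ℓ hl κ a) (gamma1 ℓ hl lam a) (cutM ℓ n hl lam a) := by
  have hmn := cutM_le hl (a := a) hlam
  rw [yEl, yEl, yShift, ← Nat.add_sub_cancel' hmn, List.range_add, List.map_append,
    List.prod_append, Nat.add_sub_cancel' hmn, List.map_map]
  congr 2
  · refine List.map_congr_left fun j hj => ?_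
    have hj := List.mem_range.1 hj
    rw [dif_pos (show j < n by omega), dif_pos (show j < n by omega),
      addCount_initTab_of_le e hl κ hlam hγ (Nat.le_add_left 1 j) hj]
  · refine List.map_congr_left fun j hj => ?_
    have hj := List.mem_range.1 hj
    have hcomm : j + cutM ℓ n hl lam a = cutM ℓ n hl lam a + j := add_comm _ _
    simp only [Function.comp, hcomm, dif_pos (show cutM ℓ n hl lam a + j < n by omega),
      add_assoc, addCount_initTab_cutM_add e hl κ hlam hγ (Nat.le_add_left 1 j) (by omega)]

lemma thetaFree_fPsiHat (hlam : IsMultipartition ℓ n lam) {U V : Node 1 → ℕ}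
    (hU : IsStdTab 1 (n - cutM ℓ n hl lam a) (gamma1 ℓ hl lam a) U)
    (hV : IsStdTab 1 (n - cutM ℓ n hl lam a) (gamma1 ℓ hl lam a) V) :
    thetaFree e n Λ (cutM ℓ n hl lam a)
        (resSeqT e (cutM ℓ n hl lam a) κ (muPart ℓ hl lam a)
          (initTab ℓ (cutM ℓ n hl lam a) (muPart ℓ hl lam a)))
        (fPsiHat e (n - cutM ℓ n hl lam a) (kappa1 e ℓ hl κ a) (gamma1 ℓ hl lam a) U V)
      = psiWord e n Λ (stdWord ℓ n lam (extendTab hl n lam a U)).reverse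
        * ce e n Λ (resSeqT e n κ lam (initTab ℓ n lam))
        * yShift e n Λ (kappa1 e ℓ hl κ a) (gamma1 ℓ hl lam a) (cutM ℓ n hl lam a)
        * psiWord e n Λ (stdWord ℓ n lam (extendTab hl n lam a V)) := by
  rw [fPsiHat, map_mul, map_mul, map_mul,
    thetaFree_fPsiWord _ _ fun r hr => hU.mem_stdWord (List.mem_reverse.1 hr),
    thetaFree_fPsiWord _ _ fun r hr => hV.mem_stdWord hr, thetaFree_fe, thetaFree_fyEl,
    List.map_reverse, stdWord_extendTab hl hlam hU, stdWord_extendTab hl hlam hV]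
  exact congrArg (_ * ce e n Λ · * _ * _) (resSeqT_initTab_eq_concat e hl κ hlam hU.1)

end Assembly

end Paper

end

namespace Paper

theorem statement16_general (e n : ℕ) (Λ : ZMod e →₀ ℕ) (ℓ : ℕ) (κ : Fin ℓ → ZMod e)
    (hl : 0 < ℓ) (lam : Fin ℓ → ℕ → ℕ) (hlam : IsMultipartition ℓ n lam)
    (a : ℕ)
    (U V : Node 1 → ℕ)
    (hU : IsStdTab 1 (n - cutM ℓ n hl lam a) (gamma1 ℓ hl lam a) U)
    (hV : IsStdTab 1 (n - cutM ℓ n hl lam a) (gamma1 ℓ hl lam a) V) :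
    ∃ Ud Vd : Node ℓ → ℕ, IsStdTab ℓ n lam Ud ∧ IsStdTab ℓ n lam Vd ∧
      thetaFree e n Λ (cutM ℓ n hl lam a)
          (resSeqT e (cutM ℓ n hl lam a) κ (muPart ℓ hl lam a)
            (initTab ℓ (cutM ℓ n hl lam a) (muPart ℓ hl lam a)))
          (fPsiHat e (n - cutM ℓ n hl lam a) (kappa1 e ℓ hl κ a) (gamma1 ℓ hl lam a) U V) *
        yEl e n Λ κ (muPart ℓ hl lam a) (cutM ℓ n hl lam a)
      = psiST e n Λ κ lam Ud Vd := by
  refine ⟨extendTab hl n lam a U, extendTab hl n lam a V, isStdTab_extendTab hl hlam hU,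
    isStdTab_extendTab hl hlam hV, ?_⟩
  have hψ : Commute (psiWord e n Λ (stdWord ℓ n lam (extendTab hl n lam a V)))
      (yEl e n Λ κ (muPart ℓ hl lam a) (cutM ℓ n hl lam a)) := by
    refine psiWord_commute_yEl _ _ fun r hr => ?_
    rw [stdWord_extendTab hl hlam hV] at hr
    obtain ⟨r', hr', rfl⟩ := List.mem_map.1 hr
    exact Nat.add_le_add_left (hV.mem_stdWord hr').1 _
  rw [thetaFree_fPsiHat e hl Λ κ hlam hU hV, psiST, yEl_eq_mul_yShift e hl Λ κ hlam hU.1,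
    mul_assoc _ (psiWord _ _ _ _), hψ.eq, ← mul_assoc, mul_assoc _ (yShift _ _ _ _ _ _),
    (yShift_commute_yEl _ _ _ _ _).eq, ← mul_assoc]

theorem statement16 (e n : ℕ) (he : e ≠ 1) (Λ : ZMod e →₀ ℕ) (ℓ : ℕ)
    (hlev : Λ.sum (fun _ m => m) = ℓ) (κ : Fin ℓ → ZMod e)
    (hκ : ∀ i : ZMod e, Λ i = (Finset.univ.filter fun c : Fin ℓ => κ c = i).card)
    (hl : 0 < ℓ) (lam : Fin ℓ → ℕ → ℕ) (hlam : IsMultipartition ℓ n lam)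
    (a : ℕ) (ha : lam (lastC ℓ hl) a ≠ 0)
    (U V : Node 1 → ℕ)
    (hU : IsStdTab 1 (n - cutM ℓ n hl lam a) (gamma1 ℓ hl lam a) U)
    (hV : IsStdTab 1 (n - cutM ℓ n hl lam a) (gamma1 ℓ hl lam a) V) :
    ∃ Ud Vd : Node ℓ → ℕ, IsStdTab ℓ n lam Ud ∧ IsStdTab ℓ n lam Vd ∧
      thetaFree e n Λ (cutM ℓ n hl lam a)
          (resSeqT e (cutM ℓ n hl lam a) κ (muPart ℓ hl lam a)
            (initTab ℓ (cutM ℓ n hl lam a) (muPart ℓ hl lam a)))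
          (fPsiHat e (n - cutM ℓ n hl lam a) (kappa1 e ℓ hl κ a) (gamma1 ℓ hl lam a) U V) *
        yEl e n Λ κ (muPart ℓ hl lam a) (cutM ℓ n hl lam a)
      = psiST e n Λ κ lam Ud Vd :=
  statement16_general e n Λ ℓ κ hl lam hlam a U V hU hV

end Paper
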